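/- arXiv:2211.11247 — 5 statements merged into one kernel-verified Lean document; each statement's English description precedes it below -/
import Mathlib

section
/- For any positive definite initial matrices P_{1,0}, …, P_{N,0}, there exist a natural number k̄ and a positive definite n×n matrix P such that the iterates of the iterative law satisfy P_{i,k} ≤ P (in the Loewner order) for all i ∈ {1, …, N} and all k ≥ k̄. -/
open Matrix Filter Topology
open scoped MatrixOrder

/-!
Work with the information matrices `Pᵢ⁻¹` and write `Gⱼ = Cⱼᵀ Rⱼ⁻¹ Cⱼ`. From the first step on
every iterate dominates `Q`, so the fused information `Wᵢ = ∑ⱼ lᵢⱼ (Pⱼ⁻¹ + Gⱼ)` is bounded by a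
scalar, and then `(A Wᵢ⁻¹ Aᵀ + Q)⁻¹ ≥ c A⁻ᵀ Wᵢ A⁻¹` for a fixed `c ∈ (0, 1]`. The right-hand side is
a positive linear map `Φ` applied to `P⁻¹ + G`, so unrolling gives `P_{m+1}⁻¹ ≥ ∑_{t=1}^{m} Φᵗ G`,
where `(Φᵗ G)ᵢ = cᵗ (A⁻ᵗ)ᵀ (∑ⱼ (Lᵗ)ᵢⱼ Gⱼ) A⁻ᵗ`. By primitivity the weights `(Lᵗ)ᵢⱼ` are
uniformly positive once `t` is large, and over `n` consecutive such `t` these terms add up to a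
congruence of the observability Gramian, which is positive definite. Inverting this uniform lower
bound gives the upper bound.
-/

lemma exists_pos_forall_le_of_forall_pos {ι : Type*} [Finite ι] {f : ι → ℝ}
    (hf : ∀ i, 0 < f i) : ∃ r : ℝ, 0 < r ∧ ∀ i, r ≤ f i := by
  have h : ∀ᶠ r in 𝓝[>] (0 : ℝ), 0 < r ∧ ∀ i, r ≤ f i :=
    eventually_mem_nhdsWithin.and <|
      (eventually_all.2 fun i => eventually_le_nhds (hf i)).filter_mono nhdsWithin_le_nhds
  exact h.exists

lemma sum_range_iterate_le {E : Type*} [AddCommMonoid E] [PartialOrder E] [IsOrderedAddMonoid E]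
    (Φ : E →+ E) (hΦ : Monotone Φ) {g : E} {y : ℕ → E} (h0 : 0 ≤ y 0)
    (hy : ∀ k, Φ (y k + g) ≤ y (k + 1)) (m : ℕ) :
    ∑ t ∈ Finset.range m, Φ^[t + 1] g ≤ y m := by
  induction m with
  | zero => simpa using h0
  | succ m ih =>
    calc ∑ t ∈ Finset.range (m + 1), Φ^[t + 1] g
        = Φ (∑ t ∈ Finset.range m, Φ^[t + 1] g + g) := by
          simp [Finset.sum_range_succ', map_sum, Function.iterate_succ_apply']
      _ ≤ Φ (y m + g) := hΦ (by gcongr)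
      _ ≤ y (m + 1) := hy m

namespace Matrix

variable {σ ι : Type*}

lemma PosDef.of_le {X Y : Matrix σ σ ℝ} (hX : X.PosDef) (h : X ≤ Y) : Y.PosDef := by
  simpa using hX.add_posSemidef h

lemma posDef_sum_smul [Fintype ι] {w : ι → ℝ} (hw : ∀ j, 0 ≤ w j) (hw_pos : ∃ j, 0 < w j)
    {X : ι → Matrix σ σ ℝ} (hX : ∀ j, (X j).PosDef) : (∑ j, w j • X j).PosDef := by
  classical
  obtain ⟨j₀, hj₀⟩ := hw_pos
  rw [← Finset.add_sum_erase _ _ (Finset.mem_univ j₀)]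
  exact ((hX j₀).smul hj₀).add_posSemidef
    (posSemidef_sum _ fun j _ => (hX j).posSemidef.smul (hw j))

lemma le_pow_apply_of_forall_le [Fintype ι] [DecidableEq ι] {L : Matrix ι ι ℝ}
    (hL : L ∈ rowStochastic ℝ ι) {k t : ℕ} (hkt : k ≤ t) {ε : ℝ}
    (hε : ∀ i j, ε ≤ (L ^ k) i j) (i j : ι) : ε ≤ (L ^ t) i j := by
  obtain ⟨s, rfl⟩ := Nat.exists_eq_add_of_le' hkt
  have hLs := pow_mem hL s
  calc ε = ∑ l, (L ^ s) i l * ε := by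
        rw [← Finset.sum_mul, sum_row_of_mem_rowStochastic hLs, one_mul]
    _ ≤ ∑ l, (L ^ s) i l * (L ^ k) l j := Finset.sum_le_sum fun l _ =>
        mul_le_mul_of_nonneg_left (hε l j) (nonneg_of_mem_rowStochastic hLs)
    _ = (L ^ (s + k)) i j := by rw [pow_add, mul_apply]

lemma exists_pos_forall_smul_one_le [Finite ι] {m : ι → Type*} [∀ j, Fintype (m j)]
    [∀ j, DecidableEq (m j)] {X : ∀ j, Matrix (m j) (m j) ℝ} (hX : ∀ j, (X j).PosDef) :
    ∃ r : ℝ, 0 < r ∧ ∀ j, r • 1 ≤ X j := by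
  have hmin : ∀ j, ∃ r : ℝ, 0 < r ∧ r • 1 ≤ X j := fun j => by
    obtain ⟨r, hr, hle⟩ := exists_pos_forall_le_of_forall_pos (hX j).eigenvalues_pos
    refine ⟨r, hr, ?_⟩
    rw [← Algebra.algebraMap_eq_smul_one]
    refine algebraMap_le_of_le_spectrum (fun x hx => ?_)
      (isHermitian_iff_isSelfAdjoint.1 (hX j).isHermitian)
    rw [(hX j).isHermitian.spectrum_real_eq_range_eigenvalues] at hx
    obtain ⟨i, rfl⟩ := hx
    exact hle i
  choose a ha0 ha using hmin
  obtain ⟨r, hr, hra⟩ := exists_pos_forall_le_of_forall_pos ha0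
  exact ⟨r, hr, fun j => (smul_le_smul_of_nonneg_right (hra j) zero_le_one).trans (ha j)⟩

variable [Fintype σ]

lemma transpose_mul_mul_le_transpose_mul_mul {κ : Type*} [Fintype κ] {X Y : Matrix σ σ ℝ}
    (h : X ≤ Y) (T : Matrix σ κ ℝ) : Tᵀ * X * T ≤ Tᵀ * Y * T := by
  rw [le_iff, ← Matrix.sub_mul, ← Matrix.mul_sub, ← conjTranspose_eq_transpose_of_trivial]
  exact h.conjTranspose_mul_mul_same T

variable [DecidableEq σ]

lemma posDef_gramian_transpose_mul_inv_mul [Fintype ι] {m : ι → Type*} [∀ j, Fintype (m j)]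
    [∀ j, DecidableEq (m j)] {A : Matrix σ σ ℝ} {C : ∀ j, Matrix (m j) σ ℝ}
    {R : ∀ j, Matrix (m j) (m j) ℝ} (hR : ∀ j, (R j).PosDef) {n : ℕ}
    (hObs : (∑ k ∈ Finset.range n, (A ^ k)ᵀ * (∑ j, (C j)ᵀ * C j) * A ^ k).PosDef) :
    (∑ k ∈ Finset.range n, (A ^ k)ᵀ * (∑ j, (C j)ᵀ * (R j)⁻¹ * C j) * A ^ k).PosDef := by
  obtain ⟨r, hr, hrR⟩ := exists_pos_forall_smul_one_le fun j => (hR j).inv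
  refine (hObs.smul hr).of_le ?_
  rw [Finset.smul_sum]
  refine Finset.sum_le_sum fun k _ => ?_
  rw [← Matrix.smul_mul, ← Matrix.mul_smul]
  refine transpose_mul_mul_le_transpose_mul_mul ?_ _
  rw [Finset.smul_sum]
  refine Finset.sum_le_sum fun j _ => ?_
  simpa using transpose_mul_mul_le_transpose_mul_mul (hrR j) (C j)

lemma PosDef.inv_le_inv {X Y : Matrix σ σ ℝ} (hX : X.PosDef) (h : X ≤ Y) : Y⁻¹ ≤ X⁻¹ := by
  have hY := hX.of_le h
  have := hX.isUnit.invertible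
  have := hY.isUnit.invertible
  have := hX.inv.isUnit.invertible
  -- `[Y, 1; 1, X⁻¹]` is positive semidefinite as its Schur complement `Y - X` is; hence so is its
  -- other Schur complement `X⁻¹ - Y⁻¹`.
  have hblock : (fromBlocks Y 1 1ᴴ X⁻¹).PosSemidef :=
    (fromBlocks₂₂ Y 1 hX.inv).2 (by simpa [inv_inv_of_invertible] using le_iff.1 h)
  exact le_iff.2 (by simpa using (fromBlocks₁₁ 1 X⁻¹ hY).1 hblock)

lemma inv_smul_of_ne_zero {X : Matrix σ σ ℝ} (hX : IsUnit X) {a : ℝ} (ha : a ≠ 0) :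
    (a • X)⁻¹ = a⁻¹ • X⁻¹ := by
  simpa [Units.smul_def] using inv_smul' X (Units.mk0 a ha) ((isUnit_iff_isUnit_det X).1 hX)

lemma IsHermitian.exists_pos_le_smul_one {X : Matrix σ σ ℝ} (hX : X.IsHermitian) :
    ∃ a : ℝ, 0 < a ∧ X ≤ a • 1 := by
  obtain ⟨a, ha⟩ := (Set.finite_range hX.eigenvalues).bddAbove
  refine ⟨max a 1, by positivity, ?_⟩
  rw [← Algebra.algebraMap_eq_smul_one]
  refine le_algebraMap_of_spectrum_le (fun x hx => ?_) (isHermitian_iff_isSelfAdjoint.1 hX)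
  rw [hX.spectrum_real_eq_range_eigenvalues] at hx
  exact (ha hx).trans (le_max_left _ _)

lemma exists_pos_forall_le_smul_one [Finite ι] {X : ι → Matrix σ σ ℝ}
    (hX : ∀ j, (X j).IsHermitian) : ∃ β : ℝ, 0 < β ∧ ∀ j, X j ≤ β • 1 := by
  choose a ha using fun j => (hX j).exists_pos_le_smul_one.imp fun _ h => h.2
  obtain ⟨β, hβ⟩ := (Set.finite_range a).bddAbove
  refine ⟨max β 1, by positivity, fun j => (ha j).trans ?_⟩
  exact smul_le_smul_of_nonneg_right ((hβ ⟨j, rfl⟩).trans (le_max_left _ _)) zero_le_one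

lemma smul_le_inv_inv_add {W B : Matrix σ σ ℝ} (hW : W.PosDef) (hB : B.PosSemidef) {β b : ℝ}
    (hβ : 0 < β) (hb : 0 ≤ b) (hWβ : W ≤ β • 1) (hBb : B ≤ b • 1) :
    (1 + b * β)⁻¹ • W ≤ (W⁻¹ + B)⁻¹ := by
  have hWinv : β⁻¹ • (1 : Matrix σ σ ℝ) ≤ W⁻¹ := by
    simpa [inv_smul_of_ne_zero isUnit_one hβ.ne'] using hW.inv_le_inv hWβ
  have hbound : W⁻¹ + B ≤ (1 + b * β) • W⁻¹ := calc
    W⁻¹ + B ≤ W⁻¹ + (b * β) • (β⁻¹ • 1) := by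
      rwa [smul_smul, mul_assoc, mul_inv_cancel₀ hβ.ne', mul_one, add_le_add_iff_left]
    _ ≤ W⁻¹ + (b * β) • W⁻¹ := by gcongr
    _ = (1 + b * β) • W⁻¹ := by rw [add_smul, one_smul]
  simpa [inv_smul_of_ne_zero hW.inv.isUnit (by positivity : 1 + b * β ≠ 0),
    nonsing_inv_nonsing_inv W ((isUnit_iff_isUnit_det W).1 hW.isUnit)]
    using (hW.inv.add_posSemidef hB).inv_le_inv hbound

lemma smul_le_inv_mul_inv_mul_transpose_add {A Q W : Matrix σ σ ℝ} (hA : IsUnit A.det)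
    (hQ : Q.PosDef) (hW : W.PosDef) {β b : ℝ} (hβ : 0 < β) (hb : 0 ≤ b) (hWβ : W ≤ β • 1)
    (hQb : A⁻¹ * Q * (A⁻¹)ᵀ ≤ b • 1) :
    (1 + b * β)⁻¹ • ((A⁻¹)ᵀ * W * A⁻¹) ≤ (A * W⁻¹ * Aᵀ + Q)⁻¹ := by
  have hB : (A⁻¹ * Q * (A⁻¹)ᵀ).PosSemidef := by
    simpa using hQ.posSemidef.mul_mul_conjTranspose_same A⁻¹
  have hQ' : A * (A⁻¹ * Q * (A⁻¹)ᵀ) * Aᵀ = Q := by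
    simp only [← Matrix.mul_assoc, mul_nonsing_inv _ hA, Matrix.one_mul]
    rw [Matrix.mul_assoc, ← transpose_mul, mul_nonsing_inv _ hA, transpose_one, Matrix.mul_one]
  rw [← hQ', ← Matrix.add_mul, ← Matrix.mul_add, Matrix.mul_inv_rev, Matrix.mul_inv_rev,
    ← Matrix.mul_assoc, ← transpose_nonsing_inv, ← Matrix.smul_mul, ← Matrix.mul_smul]
  exact transpose_mul_mul_le_transpose_mul_mul (smul_le_inv_inv_add hW hB hβ hb hWβ hQb) _

variable {R : Type*} [CommRing R]

lemma pow_mul_inv_pow_add {A : Matrix σ σ R} (hA : IsUnit A.det) (a b : ℕ) :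
    A ^ a * A⁻¹ ^ (a + b) = A⁻¹ ^ b := by
  rw [pow_add, ← Matrix.mul_assoc, inv_pow', mul_nonsing_inv _ (by rw [det_pow]; exact hA.pow a),
    Matrix.one_mul]

lemma sum_range_transpose_inv_pow_mul_mul {A : Matrix σ σ R} (hA : IsUnit A.det)
    (M : Matrix σ σ R) (d n : ℕ) :
    ∑ s ∈ Finset.range n, (A⁻¹ ^ (d + s + 1))ᵀ * M * A⁻¹ ^ (d + s + 1) =
      (A⁻¹ ^ (d + n))ᵀ * (∑ k ∈ Finset.range n, (A ^ k)ᵀ * M * A ^ k) * A⁻¹ ^ (d + n) := by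
  rw [Matrix.mul_sum, Matrix.sum_mul, ← Finset.sum_range_reflect _ n]
  refine Finset.sum_congr rfl fun s hs => ?_
  rw [← pow_mul_inv_pow_add hA s,
    show s + (d + (n - 1 - s) + 1) = d + n by have := Finset.mem_range.1 hs; omega, transpose_mul]
  simp only [Matrix.mul_assoc]

end Matrix

section HCRE

variable {σ ι : Type*} [Fintype ι]

def consensus (L : Matrix ι ι ℝ) (Y : ι → Matrix σ σ ℝ) (i : ι) : Matrix σ σ ℝ :=
  ∑ j, L i j • Y j

lemma consensus_posSemidef {L : Matrix ι ι ℝ} (hL : ∀ i j, 0 ≤ L i j) {Y : ι → Matrix σ σ ℝ}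
    (hY : ∀ j, (Y j).PosSemidef) (i : ι) : (consensus L Y i).PosSemidef :=
  posSemidef_sum _ fun j _ => (hY j).smul (hL i j)

lemma consensus_posDef [DecidableEq ι] {L : Matrix ι ι ℝ} (hL : L ∈ rowStochastic ℝ ι)
    {Y : ι → Matrix σ σ ℝ} (hY : ∀ j, (Y j).PosDef) (i : ι) : (consensus L Y i).PosDef := by
  obtain ⟨j, -, hj⟩ := Finset.exists_ne_zero_of_sum_ne_zero
    ((sum_row_of_mem_rowStochastic hL i).trans_ne one_ne_zero)
  exact posDef_sum_smul (w := L i) (fun j => nonneg_of_mem_rowStochastic hL)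
    ⟨j, (nonneg_of_mem_rowStochastic hL).lt_of_ne' hj⟩ hY

variable [Fintype σ]

def infoPropagation (c : ℝ) (T : Matrix σ σ ℝ) (L : Matrix ι ι ℝ) :
    (ι → Matrix σ σ ℝ) →+ (ι → Matrix σ σ ℝ) where
  toFun Y i := c • (Tᵀ * consensus L Y i * T)
  map_zero' := by ext; simp [consensus]
  map_add' Y Z := by
    funext i
    simp only [Pi.add_apply, consensus, smul_add, Finset.sum_add_distrib, Matrix.mul_add,
      Matrix.add_mul]

lemma infoPropagation_apply (c : ℝ) (T : Matrix σ σ ℝ) (L : Matrix ι ι ℝ)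
    (Y : ι → Matrix σ σ ℝ) (i : ι) :
    infoPropagation c T L Y i = c • (Tᵀ * consensus L Y i * T) := rfl

lemma monotone_infoPropagation {c : ℝ} (hc : 0 ≤ c) (T : Matrix σ σ ℝ) {L : Matrix ι ι ℝ}
    (hL : ∀ i j, 0 ≤ L i j) : Monotone (infoPropagation c T L) := fun _ _ h i =>
  smul_le_smul_of_nonneg_left (transpose_mul_mul_le_transpose_mul_mul
    (Finset.sum_le_sum fun j _ => smul_le_smul_of_nonneg_left (h j) (hL i j)) T) hc

variable [DecidableEq σ]

-- The right-hand side of the HCREs, with `G j = (C j)ᵀ * (R j)⁻¹ * C j`.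
noncomputable def hcreMap (A Q : Matrix σ σ ℝ) (L : Matrix ι ι ℝ) (G P : ι → Matrix σ σ ℝ)
    (i : ι) : Matrix σ σ ℝ :=
  A * (consensus L (fun j => (P j)⁻¹ + G j) i)⁻¹ * Aᵀ + Q

lemma le_hcreMap {A Q : Matrix σ σ ℝ} {L : Matrix ι ι ℝ} (hL : ∀ i j, 0 ≤ L i j)
    {G P : ι → Matrix σ σ ℝ} (hG : ∀ j, (G j).PosSemidef) (hP : ∀ j, (P j).PosSemidef)
    (i : ι) : Q ≤ hcreMap A Q L G P i := by
  rw [hcreMap, le_add_iff_nonneg_left, nonneg_iff_posSemidef]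
  simpa using ((consensus_posSemidef hL (fun j => (hP j).inv.add (hG j)) i).inv
    |>.mul_mul_conjTranspose_same A)

variable [DecidableEq ι]

lemma consensus_le_smul_one {L : Matrix ι ι ℝ} (hL : L ∈ rowStochastic ℝ ι)
    {Y : ι → Matrix σ σ ℝ} {β : ℝ} (hY : ∀ j, Y j ≤ β • 1) (i : ι) :
    consensus L Y i ≤ β • 1 :=
  calc consensus L Y i ≤ ∑ j, L i j • β • (1 : Matrix σ σ ℝ) := Finset.sum_le_sum fun j _ =>
        smul_le_smul_of_nonneg_left (hY j) (nonneg_of_mem_rowStochastic hL)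
    _ = β • 1 := by rw [← Finset.sum_smul, sum_row_of_mem_rowStochastic hL, one_smul]

lemma infoPropagation_iterate_apply (c : ℝ) (T : Matrix σ σ ℝ) (L : Matrix ι ι ℝ) (t : ℕ)
    (Y : ι → Matrix σ σ ℝ) (i : ι) :
    (infoPropagation c T L)^[t] Y i = c ^ t • ((T ^ t)ᵀ * consensus (L ^ t) Y i * T ^ t) := by
  induction t generalizing i with
  | zero => simp [consensus, Matrix.one_apply]
  | succ t ih =>
    rw [Function.iterate_succ_apply', infoPropagation_apply, pow_succ' L, pow_succ T]
    simp only [consensus, ih, transpose_mul, mul_apply, Finset.mul_sum, Finset.sum_mul,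
      Matrix.mul_smul, Matrix.smul_mul, Finset.smul_sum, smul_smul, Finset.sum_smul,
      Matrix.mul_assoc]
    rw [Finset.sum_comm]
    refine Finset.sum_congr rfl fun j _ => Finset.sum_congr rfl fun l _ => ?_
    congr 1
    ring

lemma infoPropagation_le_inv_hcreMap {A Q : Matrix σ σ ℝ} (hA : IsUnit A.det) (hQ : Q.PosDef)
    {L : Matrix ι ι ℝ} (hL : L ∈ rowStochastic ℝ ι) {G P : ι → Matrix σ σ ℝ}
    (hG : ∀ j, (G j).PosSemidef) {β b : ℝ} (hβ : 0 < β) (hb : 0 ≤ b)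
    (hQG : ∀ j, Q⁻¹ + G j ≤ β • 1) (hQb : A⁻¹ * Q * (A⁻¹)ᵀ ≤ b • 1) (hP : ∀ j, Q ≤ P j) :
    infoPropagation (1 + b * β)⁻¹ A⁻¹ L (fun j => (P j)⁻¹ + G j) ≤
      fun i => (hcreMap A Q L G P i)⁻¹ := by
  intro i
  have hPpd : ∀ j, (P j).PosDef := fun j => hQ.of_le (hP j)
  refine smul_le_inv_mul_inv_mul_transpose_add hA hQ
    (consensus_posDef hL (fun j => (hPpd j).inv.add_posSemidef (hG j)) i) hβ hb
    (consensus_le_smul_one hL (fun j => ?_) i) hQb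
  calc (P j)⁻¹ + G j ≤ Q⁻¹ + G j := by gcongr; exact hQ.inv_le_inv (hP j)
    _ ≤ β • 1 := hQG j

lemma smul_le_infoPropagation_iterate_apply {c : ℝ} (hc : 0 ≤ c) (T : Matrix σ σ ℝ)
    {L : Matrix ι ι ℝ} {G : ι → Matrix σ σ ℝ} (hG : ∀ j, (G j).PosSemidef) {t : ℕ} {ε : ℝ}
    (hε : ∀ i j, ε ≤ (L ^ t) i j) (i : ι) :
    (c ^ t * ε) • ((T ^ t)ᵀ * (∑ j, G j) * T ^ t) ≤ (infoPropagation c T L)^[t] G i := by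
  rw [infoPropagation_iterate_apply, mul_smul]
  refine smul_le_smul_of_nonneg_left ?_ (pow_nonneg hc t)
  rw [← Matrix.smul_mul, ← Matrix.mul_smul]
  refine transpose_mul_mul_le_transpose_mul_mul ?_ _
  rw [Finset.smul_sum]
  exact Finset.sum_le_sum fun j _ => smul_le_smul_of_nonneg_right (hε i j) (hG j).nonneg

lemma exists_posDef_le_sum_infoPropagation_iterate {A : Matrix σ σ ℝ} (hA : IsUnit A.det)
    {c : ℝ} (hc₀ : 0 < c) (hc₁ : c ≤ 1) {L : Matrix ι ι ℝ} (hL : L ∈ rowStochastic ℝ ι)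
    (hprim : ∃ k, ∀ i j, 0 < (L ^ k) i j) {G : ι → Matrix σ σ ℝ} (hG : ∀ j, (G j).PosSemidef)
    {n : ℕ} (hGram : (∑ k ∈ Finset.range n, (A ^ k)ᵀ * (∑ j, G j) * A ^ k).PosDef) :
    ∃ κ : ℕ, ∃ D : Matrix σ σ ℝ, D.PosDef ∧ ∀ m, κ ≤ m → ∀ i,
      D ≤ (∑ t ∈ Finset.range m, (infoPropagation c A⁻¹ L)^[t + 1] G) i := by
  obtain ⟨k, hk⟩ := hprim
  obtain ⟨ε, hε, hεk⟩ := exists_pos_forall_le_of_forall_pos fun p : ι × ι => hk p.1 p.2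
  set Φ := infoPropagation c A⁻¹ L
  have hU : IsUnit (A⁻¹ ^ (k + n)) :=
    ((isUnit_iff_isUnit_det _).2 (isUnit_nonsing_inv_det A hA)).pow _
  refine ⟨k + n, (c ^ (k + n) * ε) • ((A⁻¹ ^ (k + n))ᵀ *
    (∑ k ∈ Finset.range n, (A ^ k)ᵀ * (∑ j, G j) * A ^ k) * A⁻¹ ^ (k + n)), ?_, fun m hm i => ?_⟩
  · refine PosDef.smul ?_ (by positivity)
    simpa [star_eq_conjTranspose] using (IsUnit.posDef_star_left_conjugate_iff hU).2 hGram
  have hΦ_nonneg : ∀ t, 0 ≤ Φ^[t] G i := fun t => by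
    simpa using smul_le_infoPropagation_iterate_apply hc₀.le A⁻¹ hG (ε := 0)
      (fun i j => nonneg_of_mem_rowStochastic (pow_mem hL t)) i
  -- Only the `n` terms with `k < t ≤ k + n` are kept; there all weights `(Lᵗ)ᵢⱼ` are `≥ ε`.
  calc _ = ∑ s ∈ Finset.range n,
        (c ^ (k + n) * ε) • ((A⁻¹ ^ (k + s + 1))ᵀ * (∑ j, G j) * A⁻¹ ^ (k + s + 1)) := by
        rw [← Finset.smul_sum, sum_range_transpose_inv_pow_mul_mul hA]
    _ ≤ ∑ s ∈ Finset.range n, Φ^[k + s + 1] G i := Finset.sum_le_sum fun s hs => by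
        refine le_trans ?_ (smul_le_infoPropagation_iterate_apply hc₀.le A⁻¹ hG
          (le_pow_apply_of_forall_le hL (by omega) fun i j => hεk (i, j)) i)
        refine smul_le_smul_of_nonneg_right (mul_le_mul_of_nonneg_right
          (pow_le_pow_of_le_one hc₀.le hc₁ (by simp at hs; omega)) hε.le) ?_
        exact ((posSemidef_sum _ fun j _ => hG j).conjTranspose_mul_mul_same _).nonneg
    _ = ∑ t ∈ Finset.Ico k (k + n), Φ^[t + 1] G i := by
        rw [Finset.sum_Ico_eq_sum_range, add_tsub_cancel_left]
    _ ≤ ∑ t ∈ Finset.range m, Φ^[t + 1] G i :=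
        Finset.sum_le_sum_of_subset_of_nonneg (fun t ht => by simp at ht ⊢; omega)
          fun t _ _ => hΦ_nonneg _
    _ = _ := (Finset.sum_apply _ _ _).symm

end HCRE

theorem hcre_iterates_uniformly_bounded_general
    (n N : ℕ)
    (m : Fin N → ℕ)
    (A : Matrix (Fin n) (Fin n) ℝ) (hA : IsUnit A.det)
    (C : ∀ i : Fin N, Matrix (Fin (m i)) (Fin n) ℝ)
    (hObs : (∑ k ∈ Finset.range n, (A ^ k)ᵀ * (∑ i, (C i)ᵀ * C i) * A ^ k).PosDef)
    (Q : Matrix (Fin n) (Fin n) ℝ) (hQ : Q.PosDef)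
    (R : ∀ i : Fin N, Matrix (Fin (m i)) (Fin (m i)) ℝ) (hR : ∀ i, (R i).PosDef)
    (L : Matrix (Fin N) (Fin N) ℝ)
    (hLnonneg : ∀ i j, 0 ≤ L i j) (hLrow : ∀ i, ∑ j, L i j = 1)
    (hLprim : ∃ k : ℕ, 0 < k ∧ ∀ i j, 0 < (L ^ k) i j)
    (P0 : Fin N → Matrix (Fin n) (Fin n) ℝ) (hP0 : ∀ i, (P0 i).PosDef)
    (Pseq : ℕ → Fin N → Matrix (Fin n) (Fin n) ℝ)
    (hinit : Pseq 0 = P0)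
    (hiter : ∀ k i, Pseq (k + 1) i =
      A * (∑ j, (L i j • (Pseq k j)⁻¹ + L i j • ((C j)ᵀ * (R j)⁻¹ * C j)))⁻¹ * Aᵀ + Q) :
    ∃ (kbar : ℕ) (P : Matrix (Fin n) (Fin n) ℝ), P.PosDef ∧
      ∀ i : Fin N, ∀ k : ℕ, kbar ≤ k → (P - Pseq k i).PosSemidef := by
  have hL : L ∈ rowStochastic ℝ (Fin N) := mem_rowStochastic_iff_sum.2 ⟨hLnonneg, hLrow⟩
  set G : Fin N → Matrix (Fin n) (Fin n) ℝ := fun j => (C j)ᵀ * (R j)⁻¹ * C j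
  have hG : ∀ j, (G j).PosSemidef := fun j => by
    simpa using (hR j).inv.posSemidef.conjTranspose_mul_mul_same (C j)
  have hPseq : ∀ k, Pseq (k + 1) = hcreMap A Q L G (Pseq k) := fun k => funext fun i => by
    simpa [hcreMap, consensus, smul_add] using hiter k i
  have hPpd : ∀ k i, (Pseq k i).PosDef := by
    intro k
    induction k with
    | zero => simpa [hinit] using hP0
    | succ k ih =>
      exact fun i => hPseq k ▸ hQ.of_le (le_hcreMap hLnonneg hG (fun j => (ih j).posSemidef) i)
  have hQle : ∀ k i, Q ≤ Pseq (k + 1) i := fun k i =>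
    hPseq k ▸ le_hcreMap hLnonneg hG (fun j => (hPpd k j).posSemidef) i
  obtain ⟨β, hβ, hQG⟩ :=
    exists_pos_forall_le_smul_one fun j => hQ.inv.isHermitian.add (hG j).isHermitian
  obtain ⟨b, hb, hQb⟩ :=
    (hQ.posSemidef.mul_mul_conjTranspose_same A⁻¹).isHermitian.exists_pos_le_smul_one
  rw [conjTranspose_eq_transpose_of_trivial] at hQb
  have hc₀ : 0 < (1 + b * β)⁻¹ := by positivity
  have hc₁ : (1 + b * β)⁻¹ ≤ 1 := inv_le_one_of_one_le₀ (by nlinarith)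
  have hinfo := sum_range_iterate_le _ (monotone_infoPropagation hc₀.le A⁻¹ hLnonneg)
    (y := fun k i => (Pseq (k + 1) i)⁻¹) (fun i => (hPpd 1 i).inv.posSemidef.nonneg) fun k => by
      rw [hPseq (k + 1)]
      exact infoPropagation_le_inv_hcreMap hA hQ hL hG hβ hb.le hQG hQb (hQle k)
  obtain ⟨κ, D, hD, hDle⟩ := exists_posDef_le_sum_infoPropagation_iterate hA hc₀ hc₁ hL
    (hLprim.imp fun _ h => h.2) hG (posDef_gramian_transpose_mul_inv_mul hR hObs)
  refine ⟨κ + 1, D⁻¹, hD.inv, fun i k hk => ?_⟩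
  obtain ⟨k, rfl⟩ := Nat.exists_eq_add_of_le' (Nat.le_of_add_left_le hk)
  have := hD.inv_le_inv ((hDle k (by omega) i).trans (hinfo k i))
  rwa [nonsing_inv_nonsing_inv _ ((isUnit_iff_isUnit_det _).1 (hPpd (k + 1) i).isUnit)] at this

/-- For any positive definite initial matrices, the iterates of the
HCRE iterative law are uniformly bounded above (Loewner order) from some time on. -/
theorem hcre_iterates_uniformly_bounded
    (n N : ℕ) (hn : 0 < n) (hN : 0 < N)
    (m : Fin N → ℕ) (hm : ∀ i, 0 < m i)
    (A : Matrix (Fin n) (Fin n) ℝ) (hA : IsUnit A.det)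
    (C : ∀ i : Fin N, Matrix (Fin (m i)) (Fin n) ℝ)
    (hObs : (∑ k ∈ Finset.range n, (A ^ k)ᵀ * (∑ i, (C i)ᵀ * C i) * A ^ k).PosDef)
    (Q : Matrix (Fin n) (Fin n) ℝ) (hQ : Q.PosDef)
    (R : ∀ i : Fin N, Matrix (Fin (m i)) (Fin (m i)) ℝ) (hR : ∀ i, (R i).PosDef)
    (L : Matrix (Fin N) (Fin N) ℝ)
    (hLnonneg : ∀ i j, 0 ≤ L i j) (hLrow : ∀ i, ∑ j, L i j = 1)
    (hLprim : ∃ k : ℕ, 0 < k ∧ ∀ i j, 0 < (L ^ k) i j)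
    (P0 : Fin N → Matrix (Fin n) (Fin n) ℝ) (hP0 : ∀ i, (P0 i).PosDef)
    (Pseq : ℕ → Fin N → Matrix (Fin n) (Fin n) ℝ)
    (hinit : Pseq 0 = P0)
    (hiter : ∀ k i, Pseq (k + 1) i =
      A * (∑ j, (L i j • (Pseq k j)⁻¹ + L i j • ((C j)ᵀ * (R j)⁻¹ * C j)))⁻¹ * Aᵀ + Q) :
    ∃ (kbar : ℕ) (P : Matrix (Fin n) (Fin n) ℝ), P.PosDef ∧
      ∀ i : Fin N, ∀ k : ℕ, kbar ≤ k → (P - Pseq k i).PosSemidef :=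
  hcre_iterates_uniformly_bounded_general n N m A hA C hObs Q hQ R hR L hLnonneg hLrow hLprim P0 hP0
    Pseq hinit hiter
end

section
/- Let P_1, …, P_N be positive definite solutions of the HCREs. Then for every positive definite n×n matrix P and all indices i, j ∈ {1, …, N}, the matrices Φ_{i,j}^{(m)}(P) converge entrywise to the zero matrix as m → ∞. -/
/-!
The family `P̃_i` is a common Lyapunov function for the coupled maps
`(F_j) ↦ (∑_j Ã_{ij} F_j Ã_{ij}ᵀ)_i`. With `G_j = (P̃_j⁻¹ + S_j)⁻¹` the HCREs read
`P_j = A G_j Aᵀ + Q`, whence `P_j - A_j P̃_j A_jᵀ = Q + A G_j S_j G_j Aᵀ ≻ 0`; harmonic averaging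
with the weights `l_{ij}` turns this into `∑_j Ã_{ij} P̃_j Ã_{ij}ᵀ ≺ P̃_i`, so
`∑_j Ã_{ij} P̃_j Ã_{ij}ᵀ ≤ ρ P̃_i` for some `ρ < 1`. If `P ≤ c P̃_j`, induction on `m` gives
`0 ≤ Φ_{i,j}^{(m)}(P) ≤ c ρ^{m+1} P̃_i`, and a positive semidefinite matrix is bounded entrywise by
its diagonal.
-/

open Matrix Filter

/-- The operator `Φ_{i,j}^{(m)}(P) = ∑_{j₁,…,j_m} (Ã_{i j₁} Ã_{j₁ j₂} ⋯ Ã_{j_m j}) P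
(Ã_{i j₁} ⋯ Ã_{j_m j})ᵀ`, defined via the equivalent recursion
`Φ^{(0)}_{i,j}(P) = Ã_{ij} P Ã_{ij}ᵀ`,
`Φ^{(m+1)}_{i,j}(P) = ∑_{j₁} Ã_{i j₁} Φ^{(m)}_{j₁,j}(P) Ã_{i j₁}ᵀ`. -/
def hcrePhi {n N : ℕ} (Atil : Fin N → Fin N → Matrix (Fin n) (Fin n) ℝ) :
    ℕ → Fin N → Fin N → Matrix (Fin n) (Fin n) ℝ → Matrix (Fin n) (Fin n) ℝ
  | 0, i, j, P => Atil i j * P * (Atil i j)ᵀ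
  | m + 1, i, j, P => ∑ j1, Atil i j1 * hcrePhi Atil m j1 j P * (Atil i j1)ᵀ

open Topology
open scoped MatrixOrder

namespace Matrix

variable {n : Type*}

lemma mul_mul_transpose_le_mul_mul_transpose [Fintype n] {a b : Matrix n n ℝ} (h : a ≤ b)
    (c : Matrix n n ℝ) : c * a * cᵀ ≤ c * b * cᵀ := by
  simpa [star_eq_conjTranspose] using star_right_conjugate_le_conjugate h c

lemma PosSemidef.mul_mul_transpose_same [Fintype n] {m : Type*} [Fintype m] {M : Matrix n n ℝ}
    (hM : M.PosSemidef) (B : Matrix m n ℝ) : (B * M * Bᵀ).PosSemidef := by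
  simpa [conjTranspose_eq_transpose_of_trivial] using hM.mul_mul_conjTranspose_same B

lemma PosDef.mul_mul_transpose_of_isUnit [Fintype n] [DecidableEq n] {M B : Matrix n n ℝ}
    (hM : M.PosDef) (hB : IsUnit B) : (B * M * Bᵀ).PosDef := by
  simpa [conjTranspose_eq_transpose_of_trivial] using
    hM.mul_mul_conjTranspose_same (vecMul_injective_iff_isUnit.2 hB)

lemma PosDef.exists_pos_smul_le [Fintype n] [DecidableEq n] {D P : Matrix n n ℝ} (hD : D.PosDef)
    (hP : P.IsHermitian) : ∃ ε : ℝ, 0 < ε ∧ ε • P ≤ D := by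
  cases isEmpty_or_nonempty n
  · exact ⟨1, one_pos, le_of_eq (Subsingleton.elim _ _)⟩
  obtain ⟨r, hr, hrD⟩ := (CFC.exists_pos_algebraMap_le_iff hD.isHermitian).2
    fun _ hx => hD.isStrictlyPositive.spectrum_pos hx
  obtain ⟨c, hc⟩ :=
    (isCompact_iff_compactSpace.mpr inferInstance : IsCompact (spectrum ℝ P)).bddAbove
  have hc1 : 0 < max c 1 := lt_max_of_lt_right one_pos
  have hPc : P ≤ algebraMap ℝ _ (max c 1) :=
    le_algebraMap_of_spectrum_le fun x hx => (hc hx).trans (le_max_left _ _)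
  refine ⟨r / max c 1, div_pos hr hc1, ?_⟩
  calc (r / max c 1) • P ≤ (r / max c 1) • algebraMap ℝ _ (max c 1) :=
        smul_le_smul_of_nonneg_left hPc (div_pos hr hc1).le
    _ = algebraMap ℝ _ r := by
        rw [Algebra.algebraMap_eq_smul_one, Algebra.algebraMap_eq_smul_one, smul_smul,
          div_mul_cancel₀ _ hc1.ne']
    _ ≤ D := hrD

lemma PosSemidef.abs_apply_le [Fintype n] {M : Matrix n n ℝ} (hM : M.PosSemidef) (a b : n) :
    |M a b| ≤ (M a a + M b b) / 2 := by
  classical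
  have hsymm : M b a = M a b := by simpa using hM.1.apply a b
  have quad (u v : n) : Pi.single u (1 : ℝ) ⬝ᵥ (M *ᵥ Pi.single v 1) = M u v := by simp
  have hplus := hM.dotProduct_mulVec_nonneg (Pi.single a 1 + Pi.single b 1)
  have hminus := hM.dotProduct_mulVec_nonneg (Pi.single a 1 - Pi.single b 1)
  simp only [star_trivial, add_dotProduct, sub_dotProduct, mulVec_add, mulVec_sub,
    dotProduct_add, dotProduct_sub, quad] at hplus hminus
  rw [abs_le]
  constructor <;> linarith

lemma tendsto_zero_of_nonneg_of_le_smul [Fintype n] {M : ℕ → Matrix n n ℝ} {r : ℕ → ℝ}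
    {B : Matrix n n ℝ} (hM : ∀ k, 0 ≤ M k) (hle : ∀ k, M k ≤ r k • B) (hr : Tendsto r atTop (𝓝 0)) :
    Tendsto M atTop (𝓝 0) := by
  refine tendsto_pi_nhds.2 fun a => tendsto_pi_nhds.2 fun b => ?_
  have hdiag (k : ℕ) (c : n) : M k c c ≤ r k * B c c := by
    simpa using (le_iff.mp (hle k)).diag_nonneg (i := c)
  have hbound : Tendsto (fun k => r k * ((B a a + B b b) / 2)) atTop (𝓝 0) := by
    simpa using hr.mul_const ((B a a + B b b) / 2)
  refine squeeze_zero_norm (fun k => ?_) hbound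
  rw [Real.norm_eq_abs]
  linarith [((hM k).posSemidef).abs_apply_le a b, hdiag k a, hdiag k b]

lemma posDef_sum_smul_s3 {ι : Type*} [Fintype ι] {w : ι → ℝ} (hw : ∀ i, 0 ≤ w i)
    (hw1 : ∑ i, w i = 1) {M : ι → Matrix n n ℝ} (hM : ∀ i, (M i).PosDef) :
    (∑ i, w i • M i).PosDef := by
  classical
  obtain ⟨i₀, -, hi₀⟩ : ∃ i ∈ Finset.univ, 0 < w i := by
    by_contra! h
    linarith [Finset.sum_nonpos h]
  rw [← Finset.add_sum_erase _ _ (Finset.mem_univ i₀)]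
  exact ((hM i₀).smul hi₀).add_posSemidef
    (posSemidef_sum _ fun i _ => (hM i).posSemidef.smul (hw i))

lemma posDef_riccati_sub_closedLoop [Fintype n] [DecidableEq n] {Pt S Q : Matrix n n ℝ}
    (hPt : Pt.PosDef) (hS : S.PosSemidef) (hQ : Q.PosDef) (A : Matrix n n ℝ) :
    (A * (Pt⁻¹ + S)⁻¹ * Aᵀ + Q
      - (A * (Pt⁻¹ + S)⁻¹ * Pt⁻¹) * Pt * (A * (Pt⁻¹ + S)⁻¹ * Pt⁻¹)ᵀ).PosDef := by
  have hF : (Pt⁻¹ + S).PosDef := hPt.inv.add_posSemidef hS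
  set G := (Pt⁻¹ + S)⁻¹
  have hGT : Gᵀ = G := (isHermitian_iff_isSymm.1 hF.inv.isHermitian).eq
  have hPtT : (Pt⁻¹)ᵀ = Pt⁻¹ := (isHermitian_iff_isSymm.1 hPt.inv.isHermitian).eq
  have hG_split : G = G * Pt⁻¹ * G + G * S * G := by
    calc G = G * (Pt⁻¹ + S) * G := by rw [nonsing_inv_mul _ hF.det_pos.ne'.isUnit, one_mul]
      _ = _ := by rw [mul_add, add_mul]
  have hclosed : (A * G * Pt⁻¹) * Pt * (A * G * Pt⁻¹)ᵀ = A * (G * Pt⁻¹ * G) * Aᵀ := by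
    simp only [transpose_mul, hGT, hPtT, Matrix.mul_assoc,
      nonsing_inv_mul_cancel_left _ _ hPt.det_pos.ne'.isUnit]
  have key : A * G * Aᵀ + Q - (A * G * Pt⁻¹) * Pt * (A * G * Pt⁻¹)ᵀ
      = Q + (A * G) * S * (A * G)ᵀ := by
    rw [hclosed]
    nth_rewrite 1 [hG_split]
    simp only [mul_add, add_mul, transpose_mul, hGT, Matrix.mul_assoc]
    abel
  rw [key]
  exact hQ.add_posSemidef (hS.mul_mul_transpose_same _)

lemma posDef_harmonicMean_sub_sum [Fintype n] [DecidableEq n] {ι : Type*} [Fintype ι]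
    {w : ι → ℝ} (hw : ∀ j, 0 ≤ w j) (hw1 : ∑ j, w j = 1) {P M B : ι → Matrix n n ℝ}
    (hP : ∀ j, (P j).PosDef) (hdec : ∀ j, (P j - B j * M j * (B j)ᵀ).PosDef)
    {Pt : Matrix n n ℝ} (hPt : Pt = (∑ j, w j • (P j)⁻¹)⁻¹) :
    (Pt - ∑ j, (√(w j) • (Pt * (P j)⁻¹ * B j)) * M j *
      (√(w j) • (Pt * (P j)⁻¹ * B j))ᵀ).PosDef := by
  have hW : (∑ j, w j • (P j)⁻¹).PosDef := posDef_sum_smul_s3 hw hw1 fun j => (hP j).inv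
  have hPtpd : Pt.PosDef := hPt ▸ hW.inv
  have hPtT : Ptᵀ = Pt := (isHermitian_iff_isSymm.1 hPtpd.isHermitian).eq
  have hPinvT (j : ι) : (P j)⁻¹ᵀ = (P j)⁻¹ :=
    (isHermitian_iff_isSymm.1 (hP j).inv.isHermitian).eq
  have hterm (j : ι) :
      (√(w j) • (Pt * (P j)⁻¹ * B j)) * M j * (√(w j) • (Pt * (P j)⁻¹ * B j))ᵀ
      = Pt * (w j • ((P j)⁻¹ * (B j * M j * (B j)ᵀ) * (P j)⁻¹)) * Pt := by
    simp only [transpose_smul, transpose_mul, hPtT, hPinvT, smul_mul_assoc, mul_smul_comm,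
      smul_smul, Real.mul_self_sqrt (hw j), Matrix.mul_assoc]
  have hPt_eq : Pt = Pt * (∑ j, w j • ((P j)⁻¹ * P j * (P j)⁻¹)) * Pt := by
    have hsum : ∑ j, w j • ((P j)⁻¹ * P j * (P j)⁻¹) = ∑ j, w j • (P j)⁻¹ := by
      simp only [nonsing_inv_mul _ (hP _).det_pos.ne'.isUnit, one_mul]
    rw [hsum, hPt, nonsing_inv_mul _ hW.det_pos.ne'.isUnit, one_mul]
  have hdiff :
      Pt - ∑ j, (√(w j) • (Pt * (P j)⁻¹ * B j)) * M j * (√(w j) • (Pt * (P j)⁻¹ * B j))ᵀ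
      = Pt * (∑ j, w j • ((P j)⁻¹ * (P j - B j * M j * (B j)ᵀ) * (P j)⁻¹)) * Pt := by
    simp only [hterm, ← Finset.sum_mul, ← Finset.mul_sum, mul_sub, sub_mul, smul_sub,
      Finset.sum_sub_distrib]
    rw [← hPt_eq]
  rw [hdiff]
  have hinner (j : ι) : ((P j)⁻¹ * (P j - B j * M j * (B j)ᵀ) * (P j)⁻¹).PosDef := by
    simpa only [hPinvT] using (hdec j).mul_mul_transpose_of_isUnit (hP j).inv.isUnit
  simpa only [hPtT] using
    (posDef_sum_smul_s3 hw hw1 hinner).mul_mul_transpose_of_isUnit hPtpd.isUnit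

lemma exists_lt_one_forall_le_smul [Fintype n] [DecidableEq n] {ι : Type*} [Finite ι]
    {V D : ι → Matrix n n ℝ} (hV : ∀ i, (V i).PosDef) (hD : ∀ i, (V i - D i).PosDef) :
    ∃ ρ : ℝ, 0 ≤ ρ ∧ ρ < 1 ∧ ∀ i, D i ≤ ρ • V i := by
  have hev : ∀ᶠ ρ in 𝓝[<] (1 : ℝ), 0 ≤ ρ ∧ ∀ i, D i ≤ ρ • V i := by
    refine (eventually_of_mem (Ioo_mem_nhdsLT zero_lt_one) fun ρ hρ => hρ.1.le).and
      (eventually_all.2 fun i => ?_)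
    obtain ⟨ε, hε, hεV⟩ := (hD i).exists_pos_smul_le (hV i).isHermitian
    filter_upwards [Ioo_mem_nhdsLT (sub_lt_self 1 hε)] with ρ hρ
    calc D i = V i - (V i - D i) := (sub_sub_cancel _ _).symm
      _ ≤ V i - ε • V i := sub_le_sub_left hεV _
      _ = (1 - ε) • V i := by rw [sub_smul, one_smul]
      _ ≤ ρ • V i := smul_le_smul_of_nonneg_right hρ.1.le (hV i).posSemidef.nonneg
  obtain ⟨ρ, ⟨hρ0, hD⟩, hρ1⟩ := (hev.and self_mem_nhdsWithin).exists
  exact ⟨ρ, hρ0, hρ1, hD⟩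

end Matrix

section hcrePhi

variable {n N : ℕ} (T : Fin N → Fin N → Matrix (Fin n) (Fin n) ℝ)

lemma hcrePhi_nonneg {X : Matrix (Fin n) (Fin n) ℝ} (hX : 0 ≤ X) (k : ℕ) (i j : Fin N) :
    0 ≤ hcrePhi T k i j X := by
  induction k generalizing i with
  | zero => simpa [hcrePhi] using mul_mul_transpose_le_mul_mul_transpose hX (T i j)
  | succ k ih =>
    exact Finset.sum_nonneg fun l _ => by
      simpa using mul_mul_transpose_le_mul_mul_transpose (ih l) (T i l)

lemma sum_mul_mul_transpose_le_smul {V F : Fin N → Matrix (Fin n) (Fin n) ℝ} {ρ b : ℝ}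
    (hcontr : ∀ i, ∑ l, T i l * V l * (T i l)ᵀ ≤ ρ • V i) (hb : 0 ≤ b)
    (hF : ∀ l, F l ≤ b • V l) (i : Fin N) : ∑ l, T i l * F l * (T i l)ᵀ ≤ (b * ρ) • V i :=
  calc ∑ l, T i l * F l * (T i l)ᵀ ≤ ∑ l, T i l * (b • V l) * (T i l)ᵀ :=
        Finset.sum_le_sum fun l _ => mul_mul_transpose_le_mul_mul_transpose (hF l) _
    _ = b • ∑ l, T i l * V l * (T i l)ᵀ := by
        simp only [Finset.smul_sum, mul_smul_comm, smul_mul_assoc]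
    _ ≤ b • ρ • V i := smul_le_smul_of_nonneg_left (hcontr i) hb
    _ = (b * ρ) • V i := smul_smul _ _ _

lemma hcrePhi_le_smul {V : Fin N → Matrix (Fin n) (Fin n) ℝ} {ρ c : ℝ} (hV : ∀ i, 0 ≤ V i)
    (hρ : 0 ≤ ρ) (hc : 0 ≤ c) (hcontr : ∀ i, ∑ l, T i l * V l * (T i l)ᵀ ≤ ρ • V i)
    {X : Matrix (Fin n) (Fin n) ℝ} {j : Fin N} (hX : X ≤ c • V j) (k : ℕ) (i : Fin N) :
    hcrePhi T k i j X ≤ (c * ρ ^ (k + 1)) • V i := by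
  induction k generalizing i with
  | zero =>
    have hterm_nonneg (l : Fin N) : 0 ≤ T i l * (c • V l) * (T i l)ᵀ := by
      simpa using mul_mul_transpose_le_mul_mul_transpose (smul_nonneg hc (hV l)) (T i l)
    calc T i j * X * (T i j)ᵀ ≤ T i j * (c • V j) * (T i j)ᵀ :=
          mul_mul_transpose_le_mul_mul_transpose hX _
      _ ≤ ∑ l, T i l * (c • V l) * (T i l)ᵀ :=
          Finset.single_le_sum (fun l _ => hterm_nonneg l) (Finset.mem_univ j)
      _ ≤ (c * ρ ^ (0 + 1)) • V i := by
          simpa using sum_mul_mul_transpose_le_smul T hcontr hc (fun l => le_rfl) i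
  | succ k ih =>
    have hstep := sum_mul_mul_transpose_le_smul T hcontr (by positivity) ih i
    rwa [mul_assoc, ← pow_succ] at hstep

theorem hcrePhi_tendsto_zero_of_lyapunov {V : Fin N → Matrix (Fin n) (Fin n) ℝ}
    (hV : ∀ i, (V i).PosDef) (hlyap : ∀ i, (V i - ∑ l, T i l * V l * (T i l)ᵀ).PosDef)
    {X : Matrix (Fin n) (Fin n) ℝ} (hX : X.PosSemidef) (i j : Fin N) :
    Tendsto (fun k => hcrePhi T k i j X) atTop (𝓝 0) := by
  obtain ⟨ρ, hρ0, hρ1, hcontr⟩ := exists_lt_one_forall_le_smul hV hlyap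
  obtain ⟨ε, hε, hεX⟩ := (hV j).exists_pos_smul_le hX.isHermitian
  have hXV : X ≤ ε⁻¹ • V j := by
    simpa [smul_smul, inv_mul_cancel₀ hε.ne'] using
      smul_le_smul_of_nonneg_left hεX (inv_nonneg.2 hε.le)
  have hV0 (l : Fin N) : 0 ≤ V l := (hV l).posSemidef.nonneg
  refine tendsto_zero_of_nonneg_of_le_smul (hcrePhi_nonneg T hX.nonneg · i j)
    (hcrePhi_le_smul T hV0 hρ0 (inv_nonneg.2 hε.le) hcontr hXV · i) ?_
  simpa using ((tendsto_pow_atTop_nhds_zero_of_lt_one hρ0 hρ1).comp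
    (tendsto_add_atTop_nat 1)).const_mul ε⁻¹

end hcrePhi

theorem hcre_Phi_tendsto_zero_general
    (n N : ℕ)
    (m : Fin N → ℕ)
    (A : Matrix (Fin n) (Fin n) ℝ)
    (C : ∀ i : Fin N, Matrix (Fin (m i)) (Fin n) ℝ)
    (Q : Matrix (Fin n) (Fin n) ℝ) (hQ : Q.PosDef)
    (R : ∀ i : Fin N, Matrix (Fin (m i)) (Fin (m i)) ℝ) (hR : ∀ i, (R i).PosDef)
    (L : Matrix (Fin N) (Fin N) ℝ)
    (hLnonneg : ∀ i j, 0 ≤ L i j) (hLrow : ∀ i, ∑ j, L i j = 1)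
    (P : Fin N → Matrix (Fin n) (Fin n) ℝ) (hPpos : ∀ i, (P i).PosDef)
    (hsol : ∀ i, P i =
      A * (∑ j, (L i j • (P j)⁻¹ + L i j • ((C j)ᵀ * (R j)⁻¹ * C j)))⁻¹ * Aᵀ + Q)
    (Ptil : Fin N → Matrix (Fin n) (Fin n) ℝ)
    (hPtil : ∀ i, Ptil i = (∑ j, L i j • (P j)⁻¹)⁻¹)
    (S : Fin N → Matrix (Fin n) (Fin n) ℝ)
    (hS : ∀ j, S j = ∑ h, L j h • ((C h)ᵀ * (R h)⁻¹ * C h))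
    (Asol : Fin N → Matrix (Fin n) (Fin n) ℝ)
    (hAsol : ∀ j, Asol j = A * ((Ptil j)⁻¹ + S j)⁻¹ * (Ptil j)⁻¹)
    (Atil : Fin N → Fin N → Matrix (Fin n) (Fin n) ℝ)
    (hAtil : ∀ i j, Atil i j = Real.sqrt (L i j) • (Ptil i * (P j)⁻¹ * Asol j)) :
    ∀ (X : Matrix (Fin n) (Fin n) ℝ), X.PosDef → ∀ i j : Fin N,
      Tendsto (fun k => hcrePhi Atil k i j X) atTop (nhds 0) := by
  intro X hX i j
  have hW (i : Fin N) : (∑ j, L i j • (P j)⁻¹).PosDef :=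
    posDef_sum_smul_s3 (hLnonneg i) (hLrow i) fun j => (hPpos j).inv
  have hPtpd (i : Fin N) : (Ptil i).PosDef := hPtil i ▸ (hW i).inv
  have hCRC (h : Fin N) : ((C h)ᵀ * (R h)⁻¹ * C h).PosSemidef := by
    simpa using (hR h).inv.posSemidef.mul_mul_transpose_same (C h)ᵀ
  have hSpsd (j : Fin N) : (S j).PosSemidef :=
    hS j ▸ posSemidef_sum _ fun h _ => (hCRC h).smul (hLnonneg j h)
  have hriccati (j : Fin N) : P j = A * ((Ptil j)⁻¹ + S j)⁻¹ * Aᵀ + Q := by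
    rw [hsol j, Finset.sum_add_distrib, ← hS j, hPtil j,
      nonsing_inv_nonsing_inv _ (hW j).det_pos.ne'.isUnit]
  have hlyap (i : Fin N) : (Ptil i - ∑ l, Atil i l * Ptil l * (Atil i l)ᵀ).PosDef := by
    simp only [hAtil i]
    refine posDef_harmonicMean_sub_sum (hLnonneg i) (hLrow i) hPpos (fun l => ?_) (hPtil i)
    rw [hAsol l, hriccati l]
    exact posDef_riccati_sub_closedLoop (hPtpd l) (hSpsd l) hQ A
  exact hcrePhi_tendsto_zero_of_lyapunov Atil hPtpd hlyap hX.posSemidef i j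

/-- For positive definite solutions of the HCREs, the operators
`Φ_{i,j}^{(m)}(P)` converge entrywise to the zero matrix as `m → ∞`, for every
positive definite `P` and all indices `i, j`. -/
theorem hcre_Phi_tendsto_zero
    (n N : ℕ) (hn : 0 < n) (hN : 0 < N)
    (m : Fin N → ℕ) (hm : ∀ i, 0 < m i)
    (A : Matrix (Fin n) (Fin n) ℝ) (hA : IsUnit A.det)
    (C : ∀ i : Fin N, Matrix (Fin (m i)) (Fin n) ℝ)
    (hObs : (∑ k ∈ Finset.range n, (A ^ k)ᵀ * (∑ i, (C i)ᵀ * C i) * A ^ k).PosDef)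
    (Q : Matrix (Fin n) (Fin n) ℝ) (hQ : Q.PosDef)
    (R : ∀ i : Fin N, Matrix (Fin (m i)) (Fin (m i)) ℝ) (hR : ∀ i, (R i).PosDef)
    (L : Matrix (Fin N) (Fin N) ℝ)
    (hLnonneg : ∀ i j, 0 ≤ L i j) (hLrow : ∀ i, ∑ j, L i j = 1)
    (hLprim : ∃ k : ℕ, 0 < k ∧ ∀ i j, 0 < (L ^ k) i j)
    (P : Fin N → Matrix (Fin n) (Fin n) ℝ) (hPpos : ∀ i, (P i).PosDef)
    (hsol : ∀ i, P i =
      A * (∑ j, (L i j • (P j)⁻¹ + L i j • ((C j)ᵀ * (R j)⁻¹ * C j)))⁻¹ * Aᵀ + Q)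
    (Ptil : Fin N → Matrix (Fin n) (Fin n) ℝ)
    (hPtil : ∀ i, Ptil i = (∑ j, L i j • (P j)⁻¹)⁻¹)
    (S : Fin N → Matrix (Fin n) (Fin n) ℝ)
    (hS : ∀ j, S j = ∑ h, L j h • ((C h)ᵀ * (R h)⁻¹ * C h))
    (Asol : Fin N → Matrix (Fin n) (Fin n) ℝ)
    (hAsol : ∀ j, Asol j = A * ((Ptil j)⁻¹ + S j)⁻¹ * (Ptil j)⁻¹)
    (Atil : Fin N → Fin N → Matrix (Fin n) (Fin n) ℝ)
    (hAtil : ∀ i j, Atil i j = Real.sqrt (L i j) • (Ptil i * (P j)⁻¹ * Asol j)) :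
    ∀ (X : Matrix (Fin n) (Fin n) ℝ), X.PosDef → ∀ i j : Fin N,
      Tendsto (fun k => hcrePhi Atil k i j X) atTop (nhds 0) :=
  hcre_Phi_tendsto_zero_general n N m A C Q hQ R hR L hLnonneg hLrow P hPpos hsol Ptil hPtil S hS
    Asol hAsol Atil hAtil
end

section
/- Let P_1, …, P_N be positive definite solutions of the HCREs. Then for every i ∈ {1, …, N}, P̃_i ≥ ∑_{j=1}^N Ã_{ij} P̃_j Ã_{ij}ᵀ + ∑_{j=1}^N l_{ij} P̃_i P_j^{-1} Q P_j^{-1} P̃_i in the Loewner order. -/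
/-!
Write `K_j = P̃_j⁻¹ + S_j`, so that the HCRE reads `P_j = A K_j⁻¹ Aᵀ + Q` and
`A_j = A K_j⁻¹ P̃_j⁻¹`. Since `P̃_i⁻¹ = ∑_j l_{ij} P_j⁻¹`, we have
`P̃_i = ∑_j l_{ij} (P̃_i P_j⁻¹) P_j (P̃_i P_j⁻¹)ᵀ`, so the difference of the two sides is
`∑_j l_{ij} (P̃_i P_j⁻¹) (P_j - Q - A_j P̃_j A_jᵀ) (P̃_i P_j⁻¹)ᵀ`, and each middle factor equals
`(A K_j⁻¹) S_j (A K_j⁻¹)ᵀ`, which is positive semidefinite.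
-/

open Matrix

namespace Matrix

variable {ι κ R : Type*}

lemma smul_mul_mul_transpose_smul {m : Type*} [Fintype ι] [CommRing R] (c : R)
    (B : Matrix m ι R) (X : Matrix ι ι R) :
    (c • B) * X * (c • B)ᵀ = (c * c) • (B * X * Bᵀ) := by
  rw [transpose_smul, Matrix.smul_mul, Matrix.smul_mul, Matrix.mul_smul, smul_smul]

lemma mul_inv_add_mul_transpose_sub_eq [Fintype ι] [DecidableEq ι] [CommRing R]
    {A T S : Matrix ι ι R} (hT : IsUnit T.det) (hTs : T.IsSymm) (hSs : S.IsSymm)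
    (hK : IsUnit (T⁻¹ + S).det) :
    A * (T⁻¹ + S)⁻¹ * Aᵀ - (A * (T⁻¹ + S)⁻¹ * T⁻¹) * T * (A * (T⁻¹ + S)⁻¹ * T⁻¹)ᵀ
      = A * (T⁻¹ + S)⁻¹ * S * (A * (T⁻¹ + S)⁻¹)ᵀ := by
  set K := T⁻¹ + S
  have hKs : Kᵀ = K := (hTs.inv.add hSs).eq
  have hS : S = K - T⁻¹ := by simp [K]
  rw [transpose_mul, hTs.inv.eq, mul_assoc _ T, mul_assoc (A * K⁻¹), ← mul_assoc T,
    mul_nonsing_inv _ hT, one_mul, hS, mul_sub, sub_mul, mul_assoc A K⁻¹ K,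
    nonsing_inv_mul _ hK, mul_one, transpose_mul, transpose_nonsing_inv, hKs, mul_assoc A,
    mul_assoc (A * K⁻¹)]

lemma eq_sum_smul_mul_inv_mul_mul_transpose [Fintype ι] [DecidableEq ι] [Fintype κ]
    [CommRing R] {w : κ → R} {P : κ → Matrix ι ι R} {T : Matrix ι ι R} (hT : IsUnit T.det)
    (hTinv : T⁻¹ = ∑ j, w j • (P j)⁻¹) (hTs : T.IsSymm) (hP : ∀ j, IsUnit (P j).det)
    (hPs : ∀ j, (P j).IsSymm) :
    T = ∑ j, w j • (T * (P j)⁻¹ * P j * (T * (P j)⁻¹)ᵀ) := by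
  have hterm : ∀ j, T * (P j)⁻¹ * P j * (T * (P j)⁻¹)ᵀ = T * (P j)⁻¹ * T := fun j => by
    rw [transpose_mul, (hPs j).inv.eq, hTs.eq, nonsing_inv_mul_cancel_right _ _ (hP j), mul_assoc]
  calc T = T * T⁻¹ * T := by rw [mul_nonsing_inv _ hT, one_mul]
    _ = _ := by
      simp_rw [hterm, hTinv, Finset.mul_sum, Finset.sum_mul, mul_smul_comm, smul_mul_assoc]

lemma sub_sum_smul_conj_eq_sum_smul_conj_sub [Fintype ι] [DecidableEq ι] [Fintype κ]
    [CommRing R] {w : κ → R} {P B X : κ → Matrix ι ι R} {T Q : Matrix ι ι R}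
    (hT : IsUnit T.det) (hTinv : T⁻¹ = ∑ j, w j • (P j)⁻¹) (hTs : T.IsSymm)
    (hP : ∀ j, IsUnit (P j).det) (hPs : ∀ j, (P j).IsSymm) :
    T - (∑ j, w j • (T * (P j)⁻¹ * B j * X j * (T * (P j)⁻¹ * B j)ᵀ)
        + ∑ j, w j • (T * (P j)⁻¹ * Q * (P j)⁻¹ * T))
      = ∑ j, w j • (T * (P j)⁻¹ * (P j - B j * X j * (B j)ᵀ - Q) * (T * (P j)⁻¹)ᵀ) := by
  have hconj : ∀ j, T * (P j)⁻¹ * (P j - B j * X j * (B j)ᵀ - Q) * (T * (P j)⁻¹)ᵀ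
      = T * (P j)⁻¹ * P j * (T * (P j)⁻¹)ᵀ
        - (T * (P j)⁻¹ * B j * X j * (T * (P j)⁻¹ * B j)ᵀ
          + T * (P j)⁻¹ * Q * (P j)⁻¹ * T) := fun j => by
    simp only [transpose_mul, (hPs j).inv.eq, hTs.eq]
    noncomm_ring
  simp_rw [hconj, smul_sub, smul_add, Finset.sum_sub_distrib, Finset.sum_add_distrib,
    ← eq_sum_smul_mul_inv_mul_mul_transpose hT hTinv hTs hP hPs]

lemma PosDef.isSymm {X : Matrix ι ι ℝ} (hX : X.PosDef) : X.IsSymm :=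
  isHermitian_iff_isSymm.mp hX.isHermitian

lemma PosSemidef.mul_mul_transpose_same_s4 {m : Type*} [Fintype ι] [Fintype m]
    {X : Matrix ι ι ℝ} (hX : X.PosSemidef) (B : Matrix m ι ℝ) : (B * X * Bᵀ).PosSemidef := by
  simpa only [conjTranspose_eq_transpose_of_trivial] using hX.mul_mul_conjTranspose_same B

lemma posDef_sum_smul_of_sum_eq_one [Fintype κ] {w : κ → ℝ} (hw : ∀ j, 0 ≤ w j)
    (hw1 : ∑ j, w j = 1) {X : κ → Matrix ι ι ℝ} (hX : ∀ j, (X j).PosDef) :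
    (∑ j, w j • X j).PosDef := by
  classical
  obtain ⟨j₀, hj₀⟩ : ∃ j, 0 < w j := by
    by_contra! h
    have : ∑ j, w j = 0 := Finset.sum_eq_zero fun j _ => le_antisymm (h j) (hw j)
    linarith
  rw [← Finset.add_sum_erase _ _ (Finset.mem_univ j₀)]
  exact ((hX j₀).smul hj₀).add_posSemidef
    (posSemidef_sum _ fun j _ => (hX j).posSemidef.smul (hw j))

lemma posSemidef_mul_inv_add_mul_transpose_sub [Fintype ι] [DecidableEq ι]
    {A T S : Matrix ι ι ℝ} (hT : T.PosDef) (hS : S.PosSemidef) :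
    (A * (T⁻¹ + S)⁻¹ * Aᵀ
      - (A * (T⁻¹ + S)⁻¹ * T⁻¹) * T * (A * (T⁻¹ + S)⁻¹ * T⁻¹)ᵀ).PosSemidef := by
  have hK : (T⁻¹ + S).PosDef := hT.inv.add_posSemidef hS
  rw [mul_inv_add_mul_transpose_sub_eq hT.det_pos.ne'.isUnit hT.isSymm
    (isHermitian_iff_isSymm.mp hS.isHermitian) hK.det_pos.ne'.isUnit]
  exact hS.mul_mul_transpose_same_s4 _

end Matrix

theorem hcre_Ptil_lower_bound_general
    (n N : ℕ)
    (m : Fin N → ℕ)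
    (A : Matrix (Fin n) (Fin n) ℝ)
    (C : ∀ i : Fin N, Matrix (Fin (m i)) (Fin n) ℝ)
    (Q : Matrix (Fin n) (Fin n) ℝ)
    (R : ∀ i : Fin N, Matrix (Fin (m i)) (Fin (m i)) ℝ) (hR : ∀ i, (R i).PosDef)
    (L : Matrix (Fin N) (Fin N) ℝ)
    (hLnonneg : ∀ i j, 0 ≤ L i j) (hLrow : ∀ i, ∑ j, L i j = 1)
    (P : Fin N → Matrix (Fin n) (Fin n) ℝ) (hPpos : ∀ i, (P i).PosDef)
    (hsol : ∀ i, P i =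
      A * (∑ j, (L i j • (P j)⁻¹ + L i j • ((C j)ᵀ * (R j)⁻¹ * C j)))⁻¹ * Aᵀ + Q)
    (Ptil : Fin N → Matrix (Fin n) (Fin n) ℝ)
    (hPtil : ∀ i, Ptil i = (∑ j, L i j • (P j)⁻¹)⁻¹)
    (S : Fin N → Matrix (Fin n) (Fin n) ℝ)
    (hS : ∀ j, S j = ∑ h, L j h • ((C h)ᵀ * (R h)⁻¹ * C h))
    (Asol : Fin N → Matrix (Fin n) (Fin n) ℝ)
    (hAsol : ∀ j, Asol j = A * ((Ptil j)⁻¹ + S j)⁻¹ * (Ptil j)⁻¹)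
    (Atil : Fin N → Fin N → Matrix (Fin n) (Fin n) ℝ)
    (hAtil : ∀ i j, Atil i j = Real.sqrt (L i j) • (Ptil i * (P j)⁻¹ * Asol j)) :
    ∀ i : Fin N,
      (Ptil i - (∑ j, Atil i j * Ptil j * (Atil i j)ᵀ
        + ∑ j, L i j • (Ptil i * (P j)⁻¹ * Q * (P j)⁻¹ * Ptil i))).PosSemidef := by
  intro i
  have hweighted : ∀ j, (∑ k, L j k • (P k)⁻¹).PosDef := fun j =>
    posDef_sum_smul_of_sum_eq_one (hLnonneg j) (hLrow j) fun k => (hPpos k).inv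
  have hPtilinv : ∀ j, (Ptil j)⁻¹ = ∑ k, L j k • (P k)⁻¹ := fun j => by
    rw [hPtil, nonsing_inv_nonsing_inv _ (hweighted j).det_pos.ne'.isUnit]
  have hPtilpos : ∀ j, (Ptil j).PosDef := fun j => by
    simpa only [hPtil] using (hweighted j).inv
  have hSpos : ∀ j, (S j).PosSemidef := fun j => by
    rw [hS]
    exact posSemidef_sum _ fun h _ =>
      ((hR h).inv.posSemidef.conjTranspose_mul_mul_same (C h)).smul (hLnonneg j h)
  have hsolK : ∀ j, P j = A * ((Ptil j)⁻¹ + S j)⁻¹ * Aᵀ + Q := fun j => by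
    rw [hsol j, Finset.sum_add_distrib, hPtilinv, hS]
  have hAtil_sq : ∀ j, Atil i j * Ptil j * (Atil i j)ᵀ
      = L i j • (Ptil i * (P j)⁻¹ * Asol j * Ptil j * (Ptil i * (P j)⁻¹ * Asol j)ᵀ) := fun j => by
    rw [hAtil, smul_mul_mul_transpose_smul, Real.mul_self_sqrt (hLnonneg i j),
      mul_assoc _ (Asol j)]
  simp_rw [hAtil_sq, sub_sum_smul_conj_eq_sum_smul_conj_sub (hPtilpos i).det_pos.ne'.isUnit
    (hPtilinv i) (hPtilpos i).isSymm (fun j => (hPpos j).det_pos.ne'.isUnit)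
    (fun j => (hPpos j).isSymm)]
  refine posSemidef_sum _ fun j _ => PosSemidef.smul ?_ (hLnonneg i j)
  refine PosSemidef.mul_mul_transpose_same_s4 ?_ _
  rw [hsolK j, sub_right_comm, add_sub_cancel_right, hAsol]
  exact posSemidef_mul_inv_add_mul_transpose_sub (hPtilpos j) (hSpos j)

/-- For positive definite solutions of the HCREs, one has, in the Loewner
order, `P̃_i ≥ ∑_j Ã_{ij} P̃_j Ã_{ij}ᵀ + ∑_j l_{ij} P̃_i P_j⁻¹ Q P_j⁻¹ P̃_i`. -/
theorem hcre_Ptil_lower_bound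
    (n N : ℕ) (hn : 0 < n) (hN : 0 < N)
    (m : Fin N → ℕ) (hm : ∀ i, 0 < m i)
    (A : Matrix (Fin n) (Fin n) ℝ) (hA : IsUnit A.det)
    (C : ∀ i : Fin N, Matrix (Fin (m i)) (Fin n) ℝ)
    (hObs : (∑ k ∈ Finset.range n, (A ^ k)ᵀ * (∑ i, (C i)ᵀ * C i) * A ^ k).PosDef)
    (Q : Matrix (Fin n) (Fin n) ℝ) (hQ : Q.PosDef)
    (R : ∀ i : Fin N, Matrix (Fin (m i)) (Fin (m i)) ℝ) (hR : ∀ i, (R i).PosDef)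
    (L : Matrix (Fin N) (Fin N) ℝ)
    (hLnonneg : ∀ i j, 0 ≤ L i j) (hLrow : ∀ i, ∑ j, L i j = 1)
    (hLprim : ∃ k : ℕ, 0 < k ∧ ∀ i j, 0 < (L ^ k) i j)
    (P : Fin N → Matrix (Fin n) (Fin n) ℝ) (hPpos : ∀ i, (P i).PosDef)
    (hsol : ∀ i, P i =
      A * (∑ j, (L i j • (P j)⁻¹ + L i j • ((C j)ᵀ * (R j)⁻¹ * C j)))⁻¹ * Aᵀ + Q)
    (Ptil : Fin N → Matrix (Fin n) (Fin n) ℝ)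
    (hPtil : ∀ i, Ptil i = (∑ j, L i j • (P j)⁻¹)⁻¹)
    (S : Fin N → Matrix (Fin n) (Fin n) ℝ)
    (hS : ∀ j, S j = ∑ h, L j h • ((C h)ᵀ * (R h)⁻¹ * C h))
    (Asol : Fin N → Matrix (Fin n) (Fin n) ℝ)
    (hAsol : ∀ j, Asol j = A * ((Ptil j)⁻¹ + S j)⁻¹ * (Ptil j)⁻¹)
    (Atil : Fin N → Fin N → Matrix (Fin n) (Fin n) ℝ)
    (hAtil : ∀ i j, Atil i j = Real.sqrt (L i j) • (Ptil i * (P j)⁻¹ * Asol j)) :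
    ∀ i : Fin N,
      (Ptil i - (∑ j, Atil i j * Ptil j * (Atil i j)ᵀ
        + ∑ j, L i j • (Ptil i * (P j)⁻¹ * Q * (P j)⁻¹ * Ptil i))).PosSemidef :=
  hcre_Ptil_lower_bound_general n N m A C Q R hR L hLnonneg hLrow P hPpos hsol Ptil hPtil S hS Asol
    hAsol Atil hAtil
end

section
/- Let {P_i}_{i=1}^N be the unique group of positive definite solutions to the HCREs. Then for any positive definite initial matrices P_{1,0}, …, P_{N,0}, the iterates of the iterative law converge entrywise to the solution, i.e. lim_{k→∞} P_{i,k} = P_i for every i ∈ {1, …, N}. -/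
/-!
The Riccati map `F(X)ᵢ = A (∑ⱼ lᵢⱼ (Xⱼ⁻¹ + Sⱼ))⁻¹ Aᵀ + Q` is monotone in the Loewner order, and
since `Sⱼ ⪰ 0` it is affinely super-homogeneous: `F(tX) ⪰ t (F(X) - Q) + Q` for `t ≤ 1`, with the
reverse inequality for `t ≥ 1`. At the fixed point `P` we have `Q ⪰ c P` for some `c ∈ (0, 1)`, so
`(1 - s) P ⪯ X ⪯ (1 + s') P` implies `(1 - (1 - c) s) P ⪯ F(X) ⪯ (1 + (1 - c) s') P`. Starting from
such a sandwich of the initial matrices, the iterates are squeezed geometrically onto `P`.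
-/

open Matrix Filter Topology
open scoped MatrixOrder

section

variable {ι : Type*}

theorem Matrix.PosDef.of_smul_le {P X : Matrix ι ι ℝ} (hP : P.PosDef) {t : ℝ} (ht : 0 < t)
    (h : t • P ≤ X) : X.PosDef := by
  simpa using (hP.smul ht).add_posSemidef (le_iff.1 h)

theorem Matrix.PosSemidef.abs_apply_le_s7 {D : Matrix ι ι ℝ} (hD : D.PosSemidef) (p q : ι) :
    |D p q| ≤ (D p p + D q q) / 2 := by
  have hsymm : D q p = D p q := hD.isHermitian.apply p q
  have hdet : D p q ^ 2 ≤ D p p * D q q := by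
    have h := (hD.submatrix ![p, q]).det_nonneg
    rw [det_fin_two] at h
    simpa [hsymm, sq] using h
  have hp := hD.diag_nonneg (i := p)
  have hq := hD.diag_nonneg (i := q)
  exact abs_le_of_sq_le_sq (by nlinarith [sq_nonneg (D p p - D q q)]) (by positivity)

variable {α : Type*} {l : Filter α}

theorem Matrix.tendsto_zero_of_nonneg_of_le {D E : α → Matrix ι ι ℝ} (hD : ∀ k, 0 ≤ D k)
    (hDE : ∀ k, D k ≤ E k) (hE : Tendsto E l (𝓝 0)) : Tendsto D l (𝓝 0) := by
  have hEentry : ∀ p q, Tendsto (fun k => E k p q) l (𝓝 0) := fun p q =>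
    tendsto_pi_nhds.1 (tendsto_pi_nhds.1 hE p) q
  have hdiag : ∀ p, Tendsto (fun k => D k p p) l (𝓝 0) := fun p =>
    tendsto_of_tendsto_of_tendsto_of_le_of_le tendsto_const_nhds (hEentry p p)
      (fun k => (hD k).posSemidef.diag_nonneg) fun k => by
        simpa using (le_iff.1 (hDE k)).diag_nonneg (i := p)
  refine tendsto_pi_nhds.2 fun p => tendsto_pi_nhds.2 fun q => ?_
  refine squeeze_zero_norm (fun k => (hD k).posSemidef.abs_apply_le_s7 p q) ?_
  simpa using ((hdiag p).add (hdiag q)).div_const 2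

theorem Matrix.tendsto_of_smul_le_of_le_smul {X : α → Matrix ι ι ℝ} {P : Matrix ι ι ℝ}
    {a b : α → ℝ} (ha : Tendsto a l (𝓝 1)) (hb : Tendsto b l (𝓝 1))
    (hlow : ∀ k, a k • P ≤ X k) (hup : ∀ k, X k ≤ b k • P) : Tendsto X l (𝓝 P) := by
  have hgap : Tendsto (fun k => (b k - a k) • P) l (𝓝 0) := by
    simpa using (hb.sub ha).smul_const P
  have hD := tendsto_zero_of_nonneg_of_le (fun k => sub_nonneg.2 (hlow k))
    (fun k => by rw [sub_smul]; exact sub_le_sub_right (hup k) _) hgap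
  simpa using hD.add (ha.smul_const P)

end

section

variable {ι : Type*} [Fintype ι] [DecidableEq ι]

theorem Matrix.inv_smul_of_ne_zero_s7 {K : Type*} [Field K] (X : Matrix ι ι K) {t : K}
    (ht : t ≠ 0) : (t • X)⁻¹ = t⁻¹ • X⁻¹ := by
  by_cases hX : IsUnit X.det
  · exact inv_eq_left_inv (by simp [smul_smul, ht, nonsing_inv_mul X hX])
  · have htX : ¬ IsUnit (t • X).det := by
      rwa [det_smul, IsUnit.mul_iff, not_and_or, or_iff_right (by simpa using pow_ne_zero _ ht)]
    rw [nonsing_inv_apply_not_isUnit _ hX, nonsing_inv_apply_not_isUnit _ htX, smul_zero]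

-- Schur complements of `[[N, 1], [1, M⁻¹]]`: its positivity says both `M ≤ N` and `N⁻¹ ≤ M⁻¹`.
theorem Matrix.PosDef.inv_le_inv_of_le {M N : Matrix ι ι ℝ} (hM : M.PosDef) (h : M ≤ N) :
    N⁻¹ ≤ M⁻¹ := by
  have hN : N.PosDef := by simpa using hM.add_posSemidef (le_iff.1 h)
  have := hN.isUnit.invertible
  have := hM.isUnit.invertible
  have hblock : (fromBlocks N 1 1ᴴ M⁻¹).PosSemidef :=
    (PosDef.fromBlocks₂₂ N 1 hM.inv).2 (by simpa using le_iff.1 h)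
  simpa [le_iff] using (PosDef.fromBlocks₁₁ 1 M⁻¹ hN).1 hblock

theorem Matrix.PosDef.eventually_smul_le {X Y : Matrix ι ι ℝ} (hX : X.PosDef)
    (hY : Y.IsHermitian) : ∀ᶠ c in 𝓝[>] (0 : ℝ), c • Y ≤ X := by
  nontriviality Matrix ι ι ℝ
  obtain ⟨r, hr, hrX⟩ : ∃ r > 0, algebraMap ℝ _ r ≤ X :=
    (CFC.exists_pos_algebraMap_le_iff hX.isHermitian).2
      ((StarOrderedRing.isStrictlyPositive_iff_spectrum_pos X).1 hX.isStrictlyPositive)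
  obtain ⟨s, hs₁, hs⟩ :=
    (ContinuousFunctionalCalculus.isCompact_spectrum (R := ℝ) Y).bddAbove.exists_ge 1
  have hYs : Y ≤ s • 1 := by
    simpa [Algebra.algebraMap_eq_smul_one] using
      (le_algebraMap_iff_spectrum_le hY).2 hs
  rw [Algebra.algebraMap_eq_smul_one] at hrX
  filter_upwards [Ioc_mem_nhdsGT (div_pos hr (by linarith : (0 : ℝ) < s))] with c ⟨hc₀, hcr⟩
  calc c • Y ≤ c • s • (1 : Matrix ι ι ℝ) := smul_le_smul_of_nonneg_left hYs hc₀.le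
    _ = (c * s) • 1 := smul_smul c s 1
    _ ≤ r • 1 := smul_le_smul_of_nonneg_right ((le_div_iff₀ (by linarith)).1 hcr)
      PosSemidef.one.nonneg
    _ ≤ X := hrX

end

namespace HCRE

variable {ι κ : Type*} [Fintype ι] [DecidableEq ι] [Fintype κ]

-- `S j` stands for the output information `Cⱼᵀ Rⱼ⁻¹ Cⱼ` of agent `j`.
noncomputable def fusedInformation (L : Matrix κ κ ℝ) (S X : κ → Matrix ι ι ℝ) (i : κ) :
    Matrix ι ι ℝ :=
  ∑ j, (L i j • (X j)⁻¹ + L i j • S j)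

noncomputable def riccatiMap (A Q : Matrix ι ι ℝ) (L : Matrix κ κ ℝ) (S X : κ → Matrix ι ι ℝ)
    (i : κ) : Matrix ι ι ℝ :=
  A * (fusedInformation L S X i)⁻¹ * Aᵀ + Q

variable {A Q : Matrix ι ι ℝ} {L : Matrix κ κ ℝ} {S P X Y : κ → Matrix ι ι ℝ} {i : κ}

theorem fusedInformation_posDef (hL : ∀ j, 0 ≤ L i j) (hLpos : ∃ j, 0 < L i j)
    (hS : ∀ j, (S j).PosSemidef) (hX : ∀ j, (X j).PosDef) :
    (fusedInformation L S X i).PosDef := by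
  classical
  obtain ⟨j₀, hj₀⟩ := hLpos
  have hterm : ∀ j, L i j • (X j)⁻¹ + L i j • S j = L i j • ((X j)⁻¹ + S j) := fun j =>
    (smul_add _ _ _).symm
  rw [fusedInformation, ← Finset.add_sum_erase _ _ (Finset.mem_univ j₀), hterm]
  refine PosDef.add_posSemidef (((hX j₀).inv.add_posSemidef (hS j₀)).smul hj₀) ?_
  exact posSemidef_sum _ fun j _ => hterm j ▸ ((hX j).inv.posSemidef.add (hS j)).smul (hL j)

theorem fusedInformation_anti (hL : ∀ j, 0 ≤ L i j) (hX : ∀ j, (X j).PosDef)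
    (hXY : ∀ j, X j ≤ Y j) : fusedInformation L S Y i ≤ fusedInformation L S X i :=
  Finset.sum_le_sum fun j _ => add_le_add_left
    (smul_le_smul_of_nonneg_left ((hX j).inv_le_inv_of_le (hXY j)) (hL j)) _

theorem smul_fusedInformation_sub_fusedInformation_smul {t : ℝ} (ht : t ≠ 0) :
    t⁻¹ • fusedInformation L S X i - fusedInformation L S (t • X) i
      = (t⁻¹ - 1) • ∑ j, L i j • S j := by
  simp only [fusedInformation, Pi.smul_apply, inv_smul_of_ne_zero_s7 _ ht, Finset.smul_sum,
    ← Finset.sum_sub_distrib]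
  refine Finset.sum_congr rfl fun j _ => ?_
  module

theorem smul_riccatiMap_le_riccatiMap (hL : ∀ j, 0 ≤ L i j) (hLpos : ∃ j, 0 < L i j)
    (hS : ∀ j, (S j).PosSemidef) (hP : ∀ j, (P j).PosDef) {t : ℝ} (ht₀ : 0 < t) (ht₁ : t ≤ 1)
    (hPX : ∀ j, t • P j ≤ X j) :
    t • (riccatiMap A Q L S P i - Q) + Q ≤ riccatiMap A Q L S X i := by
  have hX : ∀ j, (X j).PosDef := fun j => (hP j).of_smul_le ht₀ (hPX j)
  have hle : fusedInformation L S X i ≤ t⁻¹ • fusedInformation L S P i := calc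
    fusedInformation L S X i ≤ fusedInformation L S (t • P) i :=
      fusedInformation_anti hL (fun j => (hP j).smul ht₀) hPX
    _ ≤ t⁻¹ • fusedInformation L S P i := by
      rw [← sub_nonneg, smul_fusedInformation_sub_fusedInformation_smul ht₀.ne']
      exact smul_nonneg (sub_nonneg.2 (one_le_inv₀ ht₀ |>.2 ht₁))
        (Finset.sum_nonneg fun j _ => smul_nonneg (hL j) (hS j).nonneg)
  have hinv := (fusedInformation_posDef hL hLpos hS hX).inv_le_inv_of_le hle
  rw [inv_smul_of_ne_zero_s7 _ (inv_ne_zero ht₀.ne'), inv_inv] at hinv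
  simpa [riccatiMap, Matrix.mul_smul, Matrix.smul_mul, star_eq_conjTranspose] using
    star_right_conjugate_le_conjugate hinv A

theorem riccatiMap_le_smul_riccatiMap (hL : ∀ j, 0 ≤ L i j) (hLpos : ∃ j, 0 < L i j)
    (hS : ∀ j, (S j).PosSemidef) (hP : ∀ j, (P j).PosDef) (hX : ∀ j, (X j).PosDef) {t : ℝ}
    (ht : 1 ≤ t) (hXP : ∀ j, X j ≤ t • P j) :
    riccatiMap A Q L S X i ≤ t • (riccatiMap A Q L S P i - Q) + Q := by
  have ht₀ : 0 < t := one_pos.trans_le ht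
  have hle : t⁻¹ • fusedInformation L S P i ≤ fusedInformation L S X i := calc
    t⁻¹ • fusedInformation L S P i ≤ fusedInformation L S (t • P) i := by
      rw [← sub_nonpos, smul_fusedInformation_sub_fusedInformation_smul ht₀.ne']
      exact smul_nonpos_of_nonpos_of_nonneg (sub_nonpos.2 (inv_le_one_of_one_le₀ ht))
        (Finset.sum_nonneg fun j _ => smul_nonneg (hL j) (hS j).nonneg)
    _ ≤ fusedInformation L S X i := fusedInformation_anti hL hX hXP
  have hinv := ((fusedInformation_posDef hL hLpos hS hP).smul (inv_pos.2 ht₀)).inv_le_inv_of_le hle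
  rw [inv_smul_of_ne_zero_s7 _ (inv_ne_zero ht₀.ne'), inv_inv] at hinv
  simpa [riccatiMap, Matrix.mul_smul, Matrix.smul_mul, star_eq_conjTranspose] using
    star_right_conjugate_le_conjugate hinv A

variable {c : ℝ}

theorem smul_le_riccatiMap_of_isFixedPt (hL : ∀ j, 0 ≤ L i j) (hLpos : ∃ j, 0 < L i j)
    (hS : ∀ j, (S j).PosSemidef) (hP : ∀ j, (P j).PosDef)
    (hfix : riccatiMap A Q L S P i = P i) (hc : c • P i ≤ Q) {s : ℝ} (hs₀ : 0 ≤ s) (hs₁ : s < 1)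
    (hPX : ∀ j, (1 - s) • P j ≤ X j) :
    (1 - (1 - c) * s) • P i ≤ riccatiMap A Q L S X i := calc
  (1 - (1 - c) * s) • P i = (1 - s) • (P i - Q) + Q - s • (Q - c • P i) := by module
  _ ≤ (1 - s) • (P i - Q) + Q := sub_le_self _ (smul_nonneg hs₀ (sub_nonneg.2 hc))
  _ ≤ riccatiMap A Q L S X i :=
    hfix ▸ smul_riccatiMap_le_riccatiMap hL hLpos hS hP (by linarith) (by linarith) hPX

theorem riccatiMap_le_smul_of_isFixedPt (hL : ∀ j, 0 ≤ L i j) (hLpos : ∃ j, 0 < L i j)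
    (hS : ∀ j, (S j).PosSemidef) (hP : ∀ j, (P j).PosDef)
    (hfix : riccatiMap A Q L S P i = P i) (hc : c • P i ≤ Q) (hX : ∀ j, (X j).PosDef) {s : ℝ}
    (hs : 0 ≤ s) (hXP : ∀ j, X j ≤ (1 + s) • P j) :
    riccatiMap A Q L S X i ≤ (1 + (1 - c) * s) • P i := calc
  riccatiMap A Q L S X i ≤ (1 + s) • (P i - Q) + Q :=
    hfix ▸ riccatiMap_le_smul_riccatiMap hL hLpos hS hP hX (by linarith) hXP
  _ ≤ (1 + s) • (P i - Q) + Q + s • (Q - c • P i) :=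
    le_add_of_nonneg_right (smul_nonneg hs (sub_nonneg.2 hc))
  _ = (1 + (1 - c) * s) • P i := by module

theorem riccati_iterate_sandwich (hL : ∀ i j, 0 ≤ L i j) (hLpos : ∀ i, ∃ j, 0 < L i j)
    (hS : ∀ j, (S j).PosSemidef) (hP : ∀ j, (P j).PosDef)
    (hfix : ∀ i, riccatiMap A Q L S P i = P i) (hc : ∀ i, c • P i ≤ Q) (hc₀ : 0 ≤ c)
    (hc₁ : c ≤ 1) {X : ℕ → κ → Matrix ι ι ℝ}
    (hX : ∀ k i, X (k + 1) i = riccatiMap A Q L S (X k) i) {a b : ℝ} (ha₀ : 0 ≤ a) (ha₁ : a < 1)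
    (hb : 0 ≤ b) (hlow : ∀ i, (1 - a) • P i ≤ X 0 i) (hup : ∀ i, X 0 i ≤ (1 + b) • P i)
    (k : ℕ) :
    ∀ i, (1 - a * (1 - c) ^ k) • P i ≤ X k i ∧ X k i ≤ (1 + b * (1 - c) ^ k) • P i := by
  induction k with
  | zero => simpa using fun i => ⟨hlow i, hup i⟩
  | succ k ih =>
    have hr₀ : 0 ≤ (1 - c) ^ k := pow_nonneg (by linarith) k
    have hr₁ : (1 - c) ^ k ≤ 1 := pow_le_one₀ (by linarith) (by linarith)
    have hs₁ : a * (1 - c) ^ k < 1 := by nlinarith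
    have hXpos : ∀ j, (X k j).PosDef := fun j => (hP j).of_smul_le (by linarith) (ih j).1
    refine fun i => ⟨?_, ?_⟩ <;> rw [hX, pow_succ]
    · convert smul_le_riccatiMap_of_isFixedPt (hL i) (hLpos i) hS hP (hfix i) (hc i)
        (by positivity) hs₁ fun j => (ih j).1 using 3
      ring
    · convert riccatiMap_le_smul_of_isFixedPt (hL i) (hLpos i) hS hP (hfix i) (hc i) hXpos
        (by positivity) fun j => (ih j).2 using 3
      ring

end HCRE

theorem hcre_iterates_converge_to_solution_general
    (n N : ℕ)
    (m : Fin N → ℕ)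
    (A : Matrix (Fin n) (Fin n) ℝ)
    (C : ∀ i : Fin N, Matrix (Fin (m i)) (Fin n) ℝ)
    (Q : Matrix (Fin n) (Fin n) ℝ) (hQ : Q.PosDef)
    (R : ∀ i : Fin N, Matrix (Fin (m i)) (Fin (m i)) ℝ) (hR : ∀ i, (R i).PosDef)
    (L : Matrix (Fin N) (Fin N) ℝ)
    (hLnonneg : ∀ i j, 0 ≤ L i j) (hLrow : ∀ i, ∑ j, L i j = 1)
    (P : Fin N → Matrix (Fin n) (Fin n) ℝ) (hPpos : ∀ i, (P i).PosDef)
    (hsol : ∀ i, P i =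
      A * (∑ j, (L i j • (P j)⁻¹ + L i j • ((C j)ᵀ * (R j)⁻¹ * C j)))⁻¹ * Aᵀ + Q)
    (P0 : Fin N → Matrix (Fin n) (Fin n) ℝ) (hP0 : ∀ i, (P0 i).PosDef)
    (Pseq : ℕ → Fin N → Matrix (Fin n) (Fin n) ℝ)
    (hinit : Pseq 0 = P0)
    (hiter : ∀ k i, Pseq (k + 1) i =
      A * (∑ j, (L i j • (Pseq k j)⁻¹ + L i j • ((C j)ᵀ * (R j)⁻¹ * C j)))⁻¹ * Aᵀ + Q) :
    ∀ i : Fin N, Tendsto (fun k => Pseq k i) atTop (nhds (P i)) := by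
  subst hinit
  have hS : ∀ j, ((C j)ᵀ * (R j)⁻¹ * C j).PosSemidef := fun j => by
    simpa using (hR j).inv.posSemidef.conjTranspose_mul_mul_same (C j)
  have hLpos : ∀ i, ∃ j, 0 < L i j := fun i => by
    simpa using Finset.exists_lt_of_sum_lt (s := .univ) (f := fun _ => 0) (by simp [hLrow i])
  obtain ⟨c, hcQ, hc₀, hc₁⟩ := ((eventually_all.2 fun i =>
    hQ.eventually_smul_le (hPpos i).isHermitian).and (Ioo_mem_nhdsGT one_pos)).exists
  obtain ⟨ε, ⟨hεlow, hεup⟩, hε₀, hε₁⟩ := ((eventually_all.2 fun i =>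
    (hP0 i).eventually_smul_le (hPpos i).isHermitian).and (eventually_all.2 fun i =>
    (hPpos i).eventually_smul_le (hP0 i).isHermitian) |>.and (Ioo_mem_nhdsGT one_pos)).exists
  have hsandwich := HCRE.riccati_iterate_sandwich hLnonneg hLpos hS hPpos
    (fun i => (hsol i).symm) hcQ hc₀.le hc₁.le hiter (a := 1 - ε) (b := ε⁻¹ - 1)
    (by linarith) (by linarith) (by linarith [one_lt_inv₀ hε₀ |>.2 hε₁])
    (fun i => by simpa using hεlow i)
    (fun i => by simpa [inv_smul_smul₀ hε₀.ne'] using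
      smul_le_smul_of_nonneg_left (hεup i) (inv_nonneg.2 hε₀.le))
  have hr : Tendsto (fun k => (1 - c) ^ k) atTop (𝓝 0) :=
    tendsto_pow_atTop_nhds_zero_of_lt_one (by linarith) (by linarith)
  exact fun i => Matrix.tendsto_of_smul_le_of_le_smul
    (by simpa using (hr.const_mul (1 - ε)).const_sub 1)
    (by simpa using (hr.const_mul (ε⁻¹ - 1)).const_add 1)
    (fun k => (hsandwich k i).1) fun k => (hsandwich k i).2

/-- The iterates of the HCRE iterative law, started from arbitrary positive
definite initial matrices, converge entrywise to the unique positive definite solution. -/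
theorem hcre_iterates_converge_to_solution
    (n N : ℕ) (hn : 0 < n) (hN : 0 < N)
    (m : Fin N → ℕ) (hm : ∀ i, 0 < m i)
    (A : Matrix (Fin n) (Fin n) ℝ) (hA : IsUnit A.det)
    (C : ∀ i : Fin N, Matrix (Fin (m i)) (Fin n) ℝ)
    (hObs : (∑ k ∈ Finset.range n, (A ^ k)ᵀ * (∑ i, (C i)ᵀ * C i) * A ^ k).PosDef)
    (Q : Matrix (Fin n) (Fin n) ℝ) (hQ : Q.PosDef)
    (R : ∀ i : Fin N, Matrix (Fin (m i)) (Fin (m i)) ℝ) (hR : ∀ i, (R i).PosDef)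
    (L : Matrix (Fin N) (Fin N) ℝ)
    (hLnonneg : ∀ i j, 0 ≤ L i j) (hLrow : ∀ i, ∑ j, L i j = 1)
    (hLprim : ∃ k : ℕ, 0 < k ∧ ∀ i j, 0 < (L ^ k) i j)
    (P : Fin N → Matrix (Fin n) (Fin n) ℝ) (hPpos : ∀ i, (P i).PosDef)
    (hsol : ∀ i, P i =
      A * (∑ j, (L i j • (P j)⁻¹ + L i j • ((C j)ᵀ * (R j)⁻¹ * C j)))⁻¹ * Aᵀ + Q)
    (P0 : Fin N → Matrix (Fin n) (Fin n) ℝ) (hP0 : ∀ i, (P0 i).PosDef)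
    (Pseq : ℕ → Fin N → Matrix (Fin n) (Fin n) ℝ)
    (hinit : Pseq 0 = P0)
    (hiter : ∀ k i, Pseq (k + 1) i =
      A * (∑ j, (L i j • (Pseq k j)⁻¹ + L i j • ((C j)ᵀ * (R j)⁻¹ * C j)))⁻¹ * Aᵀ + Q) :
    ∀ i : Fin N, Tendsto (fun k => Pseq k i) atTop (nhds (P i)) :=
  hcre_iterates_converge_to_solution_general n N m A C Q hQ R hR L hLnonneg hLrow P hPpos hsol P0
    hP0 Pseq hinit hiter
end

section
/- Let A be a real n×n matrix, let M be a positive semidefinite real n×n matrix, and let X and Y be positive definite real n×n matrices. Then A (X^{-1} + M)^{-1} Aᵀ − A (Y^{-1} + M)^{-1} Aᵀ = [A (X^{-1} + M)^{-1} X^{-1}] (X − Y) [A (Y^{-1} + M)^{-1} Y^{-1}]ᵀ. -/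
/-! Both `(X⁻¹ + M)⁻¹ - (Y⁻¹ + M)⁻¹` and `Y⁻¹ - X⁻¹ = (Y⁻¹ + M) - (X⁻¹ + M)` are instances of
`a⁻¹ - b⁻¹ = a⁻¹ (b - a) b⁻¹`. Sandwiching between `A` and `Aᵀ`, the symmetry of `Y⁻¹` and
`(Y⁻¹ + M)⁻¹` turns the right-hand factor `Y⁻¹ (Y⁻¹ + M)⁻¹ Aᵀ` into a transpose. -/

open Matrix

namespace Matrix

variable {n α : Type*} [Fintype n] [DecidableEq n] [CommRing α]

theorem inv_add_sub_inv_add {M X Y : Matrix n n α} (hX : IsUnit X) (hY : IsUnit Y)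
    (hXM : IsUnit (X⁻¹ + M)) (hYM : IsUnit (Y⁻¹ + M)) :
    (X⁻¹ + M)⁻¹ - (Y⁻¹ + M)⁻¹ = (X⁻¹ + M)⁻¹ * X⁻¹ * (X - Y) * Y⁻¹ * (Y⁻¹ + M)⁻¹ := by
  have hYX : Y⁻¹ - X⁻¹ = X⁻¹ * (X - Y) * Y⁻¹ := by
    rw [← neg_sub Y X, Matrix.mul_neg, Matrix.neg_mul, ← inv_sub_inv (iff_of_true hX hY), neg_sub]
  rw [inv_sub_inv (iff_of_true hXM hYM), add_sub_add_right_eq_sub, hYX]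
  simp only [Matrix.mul_assoc]

end Matrix

theorem resolvent_difference_identity_general
    (n : ℕ)
    (A M X Y : Matrix (Fin n) (Fin n) ℝ)
    (hM : M.PosSemidef) (hX : X.PosDef) (hY : Y.PosDef) :
    A * (X⁻¹ + M)⁻¹ * Aᵀ - A * (Y⁻¹ + M)⁻¹ * Aᵀ =
      (A * (X⁻¹ + M)⁻¹ * X⁻¹) * (X - Y) * (A * (Y⁻¹ + M)⁻¹ * Y⁻¹)ᵀ := by
  have hXM : (X⁻¹ + M).PosDef := hX.inv.add_posSemidef hM
  have hYM : (Y⁻¹ + M).PosDef := hY.inv.add_posSemidef hM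
  have hY_inv_symm : Y⁻¹.IsSymm := (isHermitian_iff_isSymm.mp hY.isHermitian).inv
  have hYM_inv_symm : (Y⁻¹ + M)⁻¹.IsSymm := (isHermitian_iff_isSymm.mp hYM.isHermitian).inv
  rw [← Matrix.sub_mul, ← Matrix.mul_sub,
    inv_add_sub_inv_add hX.isUnit hY.isUnit hXM.isUnit hYM.isUnit,
    transpose_mul, transpose_mul, hYM_inv_symm.eq, hY_inv_symm.eq]
  simp only [Matrix.mul_assoc]

/-- For a real square matrix `A`, a positive semidefinite `M`, and positive
definite `X`, `Y`:
`A (X⁻¹ + M)⁻¹ Aᵀ − A (Y⁻¹ + M)⁻¹ Aᵀ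
  = [A (X⁻¹ + M)⁻¹ X⁻¹] (X − Y) [A (Y⁻¹ + M)⁻¹ Y⁻¹]ᵀ`. -/
theorem resolvent_difference_identity
    (n : ℕ) (hn : 0 < n)
    (A M X Y : Matrix (Fin n) (Fin n) ℝ)
    (hM : M.PosSemidef) (hX : X.PosDef) (hY : Y.PosDef) :
    A * (X⁻¹ + M)⁻¹ * Aᵀ - A * (Y⁻¹ + M)⁻¹ * Aᵀ =
      (A * (X⁻¹ + M)⁻¹ * X⁻¹) * (X - Y) * (A * (Y⁻¹ + M)⁻¹ * Y⁻¹)ᵀ :=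
  resolvent_difference_identity_general n A M X Y hM hX hY
end
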